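/- arXiv:2411.01234 — 12 statements merged into one kernel-verified Lean document; each statement's English description precedes it below -/
import Mathlib

section
/- Let Y1, Y0 be random variables taking values in {0,...,J-1} with 0 ≤ Y1 - Y0 ≤ 1 almost surely. Then for every k with 1 ≤ k ≤ J-1, pr(Y1 = k, Y0 = k-1) = Σ_{j=0}^{k-1} (pr(Y0 = j) - pr(Y1 = j)) and pr(Y1 = k, Y0 = k) = Σ_{j=0}^{k} pr(Y1 = j) - Σ_{j=0}^{k-1} pr(Y0 = j). -/
open MeasureTheory Finset

/-- Probability of an event as a real number. -/
noncomputable def pr {Ω : Type*} [MeasurableSpace Ω] (μ : Measure Ω) (s : Set Ω) : ℝ :=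
  (μ s).toReal

lemma pr_le_sum {Ω : Type*} [MeasurableSpace Ω] (μ : Measure Ω) [IsProbabilityMeasure μ]
    (f : Ω → ℕ) (hf : Measurable f) (m : ℕ) :
    pr μ {ω | f ω ≤ m} = ∑ j ∈ Finset.range (m + 1), pr μ {ω | f ω = j} := by
  induction m with
  | zero => simp [pr, Nat.le_zero]
  | succ m ih =>
    have hset : {ω | f ω ≤ m + 1} = {ω | f ω ≤ m} ∪ {ω | f ω = m + 1} := by
      ext ω; simp only [Set.mem_setOf_eq, Set.mem_union]; omega
    have hdisj : Disjoint {ω | f ω ≤ m} {ω | f ω = m + 1} := by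
      rw [Set.disjoint_left]; intro ω h1 h2
      simp only [Set.mem_setOf_eq] at h1 h2; omega
    have : μ {ω | f ω ≤ m + 1} = μ {ω | f ω ≤ m} + μ {ω | f ω = m + 1} := by
      rw [hset, measure_union hdisj (hf (measurableSet_singleton _))]
    rw [Finset.sum_range_succ, ← ih, pr, this, ENNReal.toReal_add (measure_ne_top _ _)
      (measure_ne_top _ _)]
    rfl

lemma pr_diff {Ω : Type*} [MeasurableSpace Ω] (μ : Measure Ω) [IsProbabilityMeasure μ]
    {A B : Set Ω} (hA : MeasurableSet A) (hB : MeasurableSet B)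
    (hBA : B =ᵐ[μ] (A ∩ B : Set Ω)) :
    pr μ (A \ B) = pr μ A - pr μ B := by
  have hABeq : μ (A ∩ B) = μ B := (measure_congr hBA).symm
  have h1 : A \ B = A \ (A ∩ B) := by
    ext ω; simp only [Set.mem_diff, Set.mem_inter_iff]; tauto
  have h2 : μ (A \ (A ∩ B)) = μ A - μ (A ∩ B) :=
    measure_diff Set.inter_subset_left (hA.inter hB).nullMeasurableSet (measure_ne_top _ _)
  have hle : μ B ≤ μ A := by rw [← hABeq]; exact measure_mono Set.inter_subset_left
  rw [pr, h1, h2, hABeq, ENNReal.toReal_sub_of_le hle (measure_ne_top _ _)]; rfl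

/-- Identification of the joint distribution of ordinal potential outcomes under the
monotonic incremental treatment effect assumption `Y0 ≤ Y1 ≤ Y0 + 1`. -/
theorem joint_identification_incremental {Ω : Type*} [MeasurableSpace Ω] (μ : Measure Ω)
    [IsProbabilityMeasure μ] (J : ℕ) (Y1 Y0 : Ω → ℕ)
    (hY1m : Measurable Y1) (hY0m : Measurable Y0)
    (hY1 : ∀ ω, Y1 ω < J) (hY0 : ∀ ω, Y0 ω < J)
    (hmono : ∀ᵐ ω ∂μ, Y0 ω ≤ Y1 ω ∧ Y1 ω ≤ Y0 ω + 1) :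
    ∀ k, 1 ≤ k → k ≤ J - 1 →
      pr μ {ω | Y1 ω = k ∧ Y0 ω = k - 1}
        = ∑ j ∈ Finset.range k, (pr μ {ω | Y0 ω = j} - pr μ {ω | Y1 ω = j}) ∧
      pr μ {ω | Y1 ω = k ∧ Y0 ω = k}
        = ∑ j ∈ Finset.range (k + 1), pr μ {ω | Y1 ω = j}
            - ∑ j ∈ Finset.range k, pr μ {ω | Y0 ω = j} := by
  intro k hk _
  obtain ⟨m, rfl⟩ : ∃ m, k = m + 1 := ⟨k - 1, (Nat.succ_pred_eq_of_pos hk).symm⟩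
  have hA0 : MeasurableSet {ω | Y0 ω ≤ m} := hY0m measurableSet_Iic
  have hB1 : MeasurableSet {ω | Y1 ω ≤ m} := hY1m measurableSet_Iic
  have hA1 : MeasurableSet {ω | Y1 ω ≤ m + 1} := hY1m measurableSet_Iic
  constructor
  · have hae : ({ω | Y1 ω = m + 1 ∧ Y0 ω = m + 1 - 1} : Set Ω)
        =ᵐ[μ] ({ω | Y0 ω ≤ m} \ {ω | Y1 ω ≤ m} : Set Ω) := by
      rw [Filter.eventuallyEq_set]
      filter_upwards [hmono] with ω hω
      simp only [Set.mem_setOf_eq, Set.mem_diff, not_le]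
      omega
    have hsub : ({ω | Y1 ω ≤ m} : Set Ω)
        =ᵐ[μ] ({ω | Y0 ω ≤ m} ∩ {ω | Y1 ω ≤ m} : Set Ω) := by
      rw [Filter.eventuallyEq_set]
      filter_upwards [hmono] with ω hω
      simp only [Set.mem_setOf_eq, Set.mem_inter_iff]
      omega
    rw [show pr μ {ω | Y1 ω = m + 1 ∧ Y0 ω = m + 1 - 1}
        = pr μ ({ω | Y0 ω ≤ m} \ {ω | Y1 ω ≤ m}) from congrArg ENNReal.toReal (measure_congr hae),
      pr_diff μ hA0 hB1 hsub, pr_le_sum μ Y0 hY0m m, pr_le_sum μ Y1 hY1m m,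
      Finset.sum_sub_distrib]
  · have hae : ({ω | Y1 ω = m + 1 ∧ Y0 ω = m + 1} : Set Ω)
        =ᵐ[μ] ({ω | Y1 ω ≤ m + 1} \ {ω | Y0 ω ≤ m} : Set Ω) := by
      rw [Filter.eventuallyEq_set]
      filter_upwards [hmono] with ω hω
      simp only [Set.mem_setOf_eq, Set.mem_diff, not_le]
      omega
    have hsub : ({ω | Y0 ω ≤ m} : Set Ω)
        =ᵐ[μ] ({ω | Y1 ω ≤ m + 1} ∩ {ω | Y0 ω ≤ m} : Set Ω) := by
      rw [Filter.eventuallyEq_set]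
      filter_upwards [hmono] with ω hω
      simp only [Set.mem_setOf_eq, Set.mem_inter_iff]
      omega
    rw [show pr μ {ω | Y1 ω = m + 1 ∧ Y0 ω = m + 1}
        = pr μ ({ω | Y1 ω ≤ m + 1} \ {ω | Y0 ω ≤ m}) from
        congrArg ENNReal.toReal (measure_congr hae),
      pr_diff μ hA1 hA0 hsub, pr_le_sum μ Y1 hY1m (m + 1), pr_le_sum μ Y0 hY0m m]
end

section
/- Let Y1, Y0 be random variables valued in {0,...,J-1} with Y0 ≤ Y1 ≤ Y0+1 almost surely, and let y ∈ {1,...,J-1} with pr(Y1 = y) > 0. Then pr(Y0 ≠ y | Y1 = y) = Σ_{j=0}^{y-1} (pr(Y0 = j) - pr(Y1 = j)) / pr(Y1 = y). -/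
open MeasureTheory Finset

/-! Under `Y0 ≤ Y1 ≤ Y0 + 1`, the event `Y0 < y` splits into `Y1 < y` and the event that `Y1`
jumps up to `y`, i.e. `Y0 ≠ y ∧ Y1 = y`. Hence `pr(Y0 ≠ y, Y1 = y) = pr(Y0 < y) - pr(Y1 < y)`,
and both cumulative probabilities are sums of point masses over `j < y`. -/

section

variable {Ω : Type*} [MeasurableSpace Ω] {μ : Measure Ω}

lemma measureReal_setOf_lt_eq_sum [IsFiniteMeasure μ] {Y : Ω → ℕ} (hY : Measurable Y) (n : ℕ) :
    μ.real {ω | Y ω < n} = ∑ j ∈ range n, μ.real {ω | Y ω = j} := by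
  simpa [Set.preimage] using
    (sum_measureReal_preimage_singleton (range n) fun j _ => hY (measurableSet_singleton j)).symm

lemma setOf_lt_ae_eq_union_of_le_of_le_succ {Y0 Y1 : Ω → ℕ}
    (hmono : ∀ᵐ ω ∂μ, Y0 ω ≤ Y1 ω ∧ Y1 ω ≤ Y0 ω + 1) (y : ℕ) :
    {ω | Y0 ω < y} =ᵐ[μ] ({ω | Y1 ω < y} ∪ {ω | Y0 ω ≠ y ∧ Y1 ω = y} : Set Ω) := by
  filter_upwards [hmono] with ω ⟨hle, hle_succ⟩
  change (Y0 ω < y) = (Y1 ω < y ∨ (Y0 ω ≠ y ∧ Y1 ω = y))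
  apply propext
  omega

lemma measureReal_setOf_lt_of_le_of_le_succ [IsFiniteMeasure μ] {Y0 Y1 : Ω → ℕ}
    (hY1 : Measurable Y1) (hY0 : Measurable Y0)
    (hmono : ∀ᵐ ω ∂μ, Y0 ω ≤ Y1 ω ∧ Y1 ω ≤ Y0 ω + 1) (y : ℕ) :
    μ.real {ω | Y0 ω < y} = μ.real {ω | Y1 ω < y} + μ.real {ω | Y0 ω ≠ y ∧ Y1 ω = y} := by
  have hdisj : Disjoint {ω | Y1 ω < y} {ω | Y0 ω ≠ y ∧ Y1 ω = y} :=
    Set.disjoint_left.2 fun ω hlt hjump => hlt.ne hjump.2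
  have hmeas : MeasurableSet {ω | Y0 ω ≠ y ∧ Y1 ω = y} :=
    (measurableSet_eq_fun hY0 measurable_const).compl.inter
      (measurableSet_eq_fun hY1 measurable_const)
  rw [measureReal_congr (setOf_lt_ae_eq_union_of_le_of_le_succ hmono y),
    measureReal_union hdisj hmeas]

end

theorem pn_neq_identification_general {Ω : Type*} [MeasurableSpace Ω] (μ : Measure Ω)
    [IsProbabilityMeasure μ] (Y1 Y0 : Ω → ℕ)
    (hY1m : Measurable Y1) (hY0m : Measurable Y0)
    (hmono : ∀ᵐ ω ∂μ, Y0 ω ≤ Y1 ω ∧ Y1 ω ≤ Y0 ω + 1)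
    (y : ℕ) :
    pr μ {ω | Y0 ω ≠ y ∧ Y1 ω = y} / pr μ {ω | Y1 ω = y}
      = (∑ j ∈ Finset.range y, (pr μ {ω | Y0 ω = j} - pr μ {ω | Y1 ω = j}))
          / pr μ {ω | Y1 ω = y} := by
  have hpr : pr μ = μ.real := rfl
  rw [hpr, sum_sub_distrib, ← measureReal_setOf_lt_eq_sum hY0m, ← measureReal_setOf_lt_eq_sum hY1m,
    measureReal_setOf_lt_of_le_of_le_succ hY1m hY0m hmono, add_sub_cancel_left]

/-- Identification of the probability of necessity `pr(Y0 ≠ y ∣ Y1 = y)` under the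
monotonic incremental treatment effect assumption. -/
theorem pn_neq_identification {Ω : Type*} [MeasurableSpace Ω] (μ : Measure Ω)
    [IsProbabilityMeasure μ] (J : ℕ) (Y1 Y0 : Ω → ℕ)
    (hY1m : Measurable Y1) (hY0m : Measurable Y0)
    (hY1 : ∀ ω, Y1 ω < J) (hY0 : ∀ ω, Y0 ω < J)
    (hmono : ∀ᵐ ω ∂μ, Y0 ω ≤ Y1 ω ∧ Y1 ω ≤ Y0 ω + 1)
    (y : ℕ) (hy1 : 1 ≤ y) (hy2 : y ≤ J - 1)
    (hpos : 0 < pr μ {ω | Y1 ω = y}) :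
    pr μ {ω | Y0 ω ≠ y ∧ Y1 ω = y} / pr μ {ω | Y1 ω = y}
      = (∑ j ∈ Finset.range y, (pr μ {ω | Y0 ω = j} - pr μ {ω | Y1 ω = j}))
          / pr μ {ω | Y1 ω = y} :=
  pn_neq_identification_general μ Y1 Y0 hY1m hY0m hmono y
end

section
/- Let Y1, Y0 be random variables valued in {0,...,J-1} with Y0 ≤ Y1 ≤ Y0+1 almost surely, and let y ∈ {1,...,J-1} with pr(Y1 = y) > 0. Then pr(Y0 = y-1 | Y1 = y) = Σ_{j=0}^{y-1} (pr(Y0 = j) - pr(Y1 = j)) / pr(Y1 = y), and pr(Y0 = ℓ | Y1 = y) = 0 for all ℓ ∉ {y-1, y}. -/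
open MeasureTheory Finset

/-! Since `Y1 - Y0 ∈ {0, 1}` almost surely, a unit can cross level `y` only by the single step
from `y - 1` to `y`. Hence `{Y0 < y}` is, up to a null set, the disjoint union of `{Y1 < y}` and
`{Y0 = y - 1, Y1 = y}`, so `pr(Y0 = y - 1, Y1 = y) = pr(Y0 < y) - pr(Y1 < y)`, and both
cumulative probabilities are sums of the marginal probability mass functions below `y`. -/

section

variable {Ω : Type*} [MeasurableSpace Ω] {μ : Measure Ω}

theorem pr_eq_measureReal (s : Set Ω) : pr μ s = μ.real s := rfl

theorem sum_pr_eq_pr_lt [IsFiniteMeasure μ] {f : Ω → ℕ} (hf : Measurable f) (y : ℕ) :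
    ∑ j ∈ range y, pr μ {ω | f ω = j} = pr μ {ω | f ω < y} := by
  have hsum := sum_measureReal_preimage_singleton (μ := μ) (range y)
    fun j _ => hf (measurableSet_singleton j)
  rw [coe_range] at hsum
  exact hsum

variable {Y0 Y1 : Ω → ℕ}

theorem pr_lt_eq_pr_lt_add_pr_step [IsFiniteMeasure μ] (hY1 : Measurable Y1)
    (hmono : ∀ᵐ ω ∂μ, Y0 ω ≤ Y1 ω ∧ Y1 ω ≤ Y0 ω + 1) {y : ℕ} (hy : 1 ≤ y) :
    pr μ {ω | Y0 ω < y} = pr μ {ω | Y1 ω < y} + pr μ {ω | Y0 ω = y - 1 ∧ Y1 ω = y} := by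
  have hsplit : {ω | Y0 ω < y} =ᵐ[μ]
      ({ω | Y1 ω < y} ∪ {ω | Y0 ω = y - 1 ∧ Y1 ω = y} : Set Ω) := by
    rw [Filter.eventuallyEq_set]
    filter_upwards [hmono] with ω ⟨hle, hle'⟩
    simp only [Set.mem_union, Set.mem_ofPred_eq]
    omega
  have hdisj : Disjoint {ω | Y1 ω < y} {ω | Y0 ω = y - 1 ∧ Y1 ω = y} :=
    Set.disjoint_left.2 fun ω hlt heq => (Nat.lt_irrefl y) (heq.2 ▸ hlt)
  simp only [pr_eq_measureReal]
  rw [measureReal_congr hsplit, measureReal_union' hdisj (hY1 measurableSet_Iio)]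

theorem pr_joint_eq_zero (hmono : ∀ᵐ ω ∂μ, Y0 ω ≤ Y1 ω ∧ Y1 ω ≤ Y0 ω + 1) {y l : ℕ}
    (hl : l ≠ y - 1) (hl' : l ≠ y) : pr μ {ω | Y0 ω = l ∧ Y1 ω = y} = 0 := by
  have hnull : μ {ω | Y0 ω = l ∧ Y1 ω = y} = 0 := by
    rw [measure_eq_zero_iff_ae_notMem]
    filter_upwards [hmono] with ω ⟨hle, hle'⟩
    simp only [not_and]
    omega
  simp [pr, hnull]

end

theorem pn_level_identification_general {Ω : Type*} [MeasurableSpace Ω] (μ : Measure Ω)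
    [IsProbabilityMeasure μ] (Y1 Y0 : Ω → ℕ)
    (hY1m : Measurable Y1) (hY0m : Measurable Y0)
    (hmono : ∀ᵐ ω ∂μ, Y0 ω ≤ Y1 ω ∧ Y1 ω ≤ Y0 ω + 1)
    (y : ℕ) (hy1 : 1 ≤ y) :
    (pr μ {ω | Y0 ω = y - 1 ∧ Y1 ω = y} / pr μ {ω | Y1 ω = y}
      = (∑ j ∈ Finset.range y, (pr μ {ω | Y0 ω = j} - pr μ {ω | Y1 ω = j}))
          / pr μ {ω | Y1 ω = y}) ∧
    ∀ l, l ≠ y - 1 → l ≠ y →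
      pr μ {ω | Y0 ω = l ∧ Y1 ω = y} / pr μ {ω | Y1 ω = y} = 0 := by
  refine ⟨?_, fun l hl hl' => by rw [pr_joint_eq_zero hmono hl hl', zero_div]⟩
  rw [sum_sub_distrib, sum_pr_eq_pr_lt hY0m, sum_pr_eq_pr_lt hY1m,
    pr_lt_eq_pr_lt_add_pr_step hY1m hmono hy1, add_sub_cancel_left]

/-- Identification of `pr(Y0 = y-1 ∣ Y1 = y)` under the monotonic incremental treatment
effect assumption, together with vanishing of `pr(Y0 = ℓ ∣ Y1 = y)` for `ℓ ∉ {y-1, y}`. -/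
theorem pn_level_identification {Ω : Type*} [MeasurableSpace Ω] (μ : Measure Ω)
    [IsProbabilityMeasure μ] (J : ℕ) (Y1 Y0 : Ω → ℕ)
    (hY1m : Measurable Y1) (hY0m : Measurable Y0)
    (hY1 : ∀ ω, Y1 ω < J) (hY0 : ∀ ω, Y0 ω < J)
    (hmono : ∀ᵐ ω ∂μ, Y0 ω ≤ Y1 ω ∧ Y1 ω ≤ Y0 ω + 1)
    (y : ℕ) (hy1 : 1 ≤ y) (hy2 : y ≤ J - 1)
    (hpos : 0 < pr μ {ω | Y1 ω = y}) :
    (pr μ {ω | Y0 ω = y - 1 ∧ Y1 ω = y} / pr μ {ω | Y1 ω = y}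
      = (∑ j ∈ Finset.range y, (pr μ {ω | Y0 ω = j} - pr μ {ω | Y1 ω = j}))
          / pr μ {ω | Y1 ω = y}) ∧
    ∀ l, l ≠ y - 1 → l ≠ y →
      pr μ {ω | Y0 ω = l ∧ Y1 ω = y} / pr μ {ω | Y1 ω = y} = 0 :=
  pn_level_identification_general μ Y1 Y0 hY1m hY0m hmono y hy1
end

section
/- Let Y1, Y0 be random variables valued in {0,...,J-1} with Y0 ≤ Y1 ≤ Y0+1 almost surely. Then for every k ∈ {1,...,J-1}, the quantity δ_k = Σ_{j=0}^{k-1}(pr(Y0 = j) - pr(Y1 = j)) satisfies max(0, pr(Y1 = k) + pr(Y0 = k-1) - 1) ≤ δ_k ≤ min(pr(Y1 = k), pr(Y0 = k-1)). -/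
open MeasureTheory Finset

lemma pr_union_of_disjoint {Ω : Type*} [MeasurableSpace Ω] (μ : Measure Ω)
    [IsProbabilityMeasure μ] {s t : Set Ω} (h : Disjoint s t) (ht : MeasurableSet t) :
    pr μ (s ∪ t) = pr μ s + pr μ t := by
  unfold pr
  rw [measure_union h ht, ENNReal.toReal_add (measure_ne_top μ s) (measure_ne_top μ t)]

lemma sum_pr_eq {Ω : Type*} [MeasurableSpace Ω] (μ : Measure Ω) [IsProbabilityMeasure μ]
    (Y : Ω → ℕ) (hY : Measurable Y) (k : ℕ) :
    ∑ j ∈ Finset.range k, pr μ {ω | Y ω = j} = pr μ {ω | Y ω < k} := by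
  induction k with
  | zero => simp [pr]
  | succ n ih =>
    rw [Finset.sum_range_succ, ih]
    have hset : {ω | Y ω < n + 1} = {ω | Y ω < n} ∪ {ω | Y ω = n} := by
      ext ω; simp only [Set.mem_setOf_eq, Set.mem_union]; omega
    rw [hset, pr_union_of_disjoint μ
      (Set.disjoint_left.mpr (fun ω h1 h2 => by simp only [Set.mem_setOf_eq] at h1 h2; omega))
      (show MeasurableSet {ω | Y ω = n} from hY (measurableSet_singleton n))]

lemma pr_le_one {Ω : Type*} [MeasurableSpace Ω] (μ : Measure Ω) [IsProbabilityMeasure μ]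
    (s : Set Ω) : pr μ s ≤ 1 := by
  unfold pr
  rw [show (1:ℝ) = (1:ENNReal).toReal by simp]
  exact ENNReal.toReal_mono ENNReal.one_ne_top prob_le_one

lemma pr_mono {Ω : Type*} [MeasurableSpace Ω] (μ : Measure Ω) [IsProbabilityMeasure μ]
    {s t : Set Ω} (h : s ⊆ t) : pr μ s ≤ pr μ t :=
  ENNReal.toReal_mono (measure_ne_top μ t) (measure_mono h)

/-- Testable implication of the monotonic incremental treatment effect assumption:
the partial sums `δ_k` of differences of the marginal pmfs satisfy Fréchet bounds. -/
theorem delta_frechet_bounds {Ω : Type*} [MeasurableSpace Ω] (μ : Measure Ω)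
    [IsProbabilityMeasure μ] (J : ℕ) (Y1 Y0 : Ω → ℕ)
    (hY1m : Measurable Y1) (hY0m : Measurable Y0)
    (hY1 : ∀ ω, Y1 ω < J) (hY0 : ∀ ω, Y0 ω < J)
    (hmono : ∀ᵐ ω ∂μ, Y0 ω ≤ Y1 ω ∧ Y1 ω ≤ Y0 ω + 1) :
    ∀ k, 1 ≤ k → k ≤ J - 1 →
      max 0 (pr μ {ω | Y1 ω = k} + pr μ {ω | Y0 ω = k - 1} - 1)
        ≤ ∑ j ∈ Finset.range k, (pr μ {ω | Y0 ω = j} - pr μ {ω | Y1 ω = j}) ∧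
      ∑ j ∈ Finset.range k, (pr μ {ω | Y0 ω = j} - pr μ {ω | Y1 ω = j})
        ≤ min (pr μ {ω | Y1 ω = k}) (pr μ {ω | Y0 ω = k - 1}) := by
  intro k hk1 hkJ
  set A : Set Ω := {ω | Y1 ω = k} with hA
  set B : Set Ω := {ω | Y0 ω = k - 1} with hB
  have hBm : MeasurableSet B := show MeasurableSet {ω | Y0 ω = k - 1} from hY0m (measurableSet_singleton (k - 1))
  -- the partial sum equals pr of the intersection
  have hsum : ∑ j ∈ Finset.range k, (pr μ {ω | Y0 ω = j} - pr μ {ω | Y1 ω = j})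
      = pr μ {ω | Y0 ω < k} - pr μ {ω | Y1 ω < k} := by
    rw [Finset.sum_sub_distrib, sum_pr_eq μ Y0 hY0m, sum_pr_eq μ Y1 hY1m]
  set C : Set Ω := {ω | Y1 ω < k} ∪ (A ∩ B) with hC
  have hae : ({ω | Y0 ω < k} : Set Ω) =ᵐ[μ] C := by
    rw [Filter.eventuallyEq_set]
    filter_upwards [hmono] with ω hω
    obtain ⟨h1, h2⟩ := hω
    simp only [hC, hA, hB, Set.mem_setOf_eq, Set.mem_union, Set.mem_inter_iff]
    omega
  have hdisj : Disjoint {ω | Y1 ω < k} (A ∩ B) :=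
    Set.disjoint_left.mpr (fun ω h1 h2 => by
      simp only [Set.mem_setOf_eq, Set.mem_inter_iff, hA, hB] at h1 h2; omega)
  have hAms : MeasurableSet A := show MeasurableSet {ω | Y1 ω = k} from hY1m (measurableSet_singleton k)
  have hmeas : MeasurableSet (A ∩ B) := hAms.inter hBm
  have hkey : pr μ {ω | Y0 ω < k} = pr μ {ω | Y1 ω < k} + pr μ (A ∩ B) := by
    have h1 : pr μ {ω | Y0 ω < k} = pr μ C := by
      unfold pr; rw [measure_congr hae]
    rw [h1, hC, pr_union_of_disjoint μ hdisj hmeas]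
  have hδ : ∑ j ∈ Finset.range k, (pr μ {ω | Y0 ω = j} - pr μ {ω | Y1 ω = j}) = pr μ (A ∩ B) := by
    rw [hsum, hkey]; ring
  rw [hδ]
  constructor
  · apply max_le
    · exact ENNReal.toReal_nonneg
    · -- inclusion-exclusion: pr A + pr B = pr (A ∪ B) + pr (A ∩ B) ≤ 1 + pr (A ∩ B)
      have hie : pr μ (A ∪ B) + pr μ (A ∩ B) = pr μ A + pr μ B := by
        unfold pr
        rw [← ENNReal.toReal_add (measure_ne_top μ _) (measure_ne_top μ _),
          ← ENNReal.toReal_add (measure_ne_top μ _) (measure_ne_top μ _),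
          measure_union_add_inter A hBm]
      have h1 := pr_le_one μ (A ∪ B)
      linarith
  · exact le_min (pr_mono μ Set.inter_subset_left) (pr_mono μ Set.inter_subset_right)
end

section
/- Fix J ≥ 2, y ∈ {0,...,J-1}, a subset S ⊆ {0,...,J-1}, and probability mass functions p1, p0 on {0,...,J-1} with p1(y) > 0. There exists a joint distribution of (Y1, Y0) on {0,...,J-1}² with marginals p1 and p0 such that pr(Y1 = y, Y0 ∈ S) = max(0, p1(y) + p0(S) - 1), where p0(S) = Σ_{ℓ∈S} p0(ℓ). -/
/-!
Split the outcomes of `Y1` into the blocks `{y}` and its complement, and those of `Y0` into `S`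
and its complement. The block masses are Bernoulli laws with parameters `p1 y` and `p0 S`, and
the `2 × 2` table of these two Bernoulli laws whose corner cell is `max 0 (p1 y + p0 S - 1)` has
nonnegative entries. Spreading each cell over its block pair proportionally to `p1 ⊗ p0` gives a
coupling of `p1` and `p0` whose mass on `{y} × S` is that corner cell.
-/

open Finset

lemma mul_div_self_of_le {c a : ℝ} (hc : 0 ≤ c) (h : c ≤ a) : c * (a / a) = c := by
  rw [← mul_div_assoc]
  exact mul_div_cancel_of_imp fun ha => le_antisymm (ha ▸ h) hc

section BlockCoupling

variable {α β ι κ : Type*} [DecidableEq ι] [DecidableEq κ]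

def blockMass (s : Finset α) (f : α → ι) (p : α → ℝ) (i : ι) : ℝ :=
  ∑ k ∈ s with f k = i, p k

/-- On a block of mass zero the division is junk (`x / 0 = 0`), harmless because `c` and the
weights vanish there. -/
noncomputable def blockCoupling (s : Finset α) (t : Finset β) (f : α → ι) (g : β → κ)
    (p : α → ℝ) (r : β → ℝ) (c : ι → κ → ℝ) (k : α) (l : β) : ℝ :=
  c (f k) (g l) * (p k / blockMass s f p (f k)) * (r l / blockMass t g r (g l))

variable {s : Finset α} {t : Finset β} {f : α → ι} {g : β → κ} {p : α → ℝ} {r : β → ℝ}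
  {c : ι → κ → ℝ}

lemma blockMass_nonneg (hp : ∀ k, 0 ≤ p k) (i : ι) : 0 ≤ blockMass s f p i :=
  sum_nonneg fun k _ => hp k

lemma le_blockMass (hp : ∀ k, 0 ≤ p k) {k : α} (hk : k ∈ s) : p k ≤ blockMass s f p (f k) :=
  single_le_sum (fun j _ => hp j) (mem_filter.2 ⟨hk, rfl⟩)

lemma blockMass_le_sum (hp : ∀ k, 0 ≤ p k) (i : ι) : blockMass s f p i ≤ ∑ k ∈ s, p k :=
  sum_le_sum_of_subset_of_nonneg (filter_subset _ _) fun k _ _ => hp k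

lemma blockMass_false_eq (f : α → Bool) :
    blockMass s f p false = ∑ k ∈ s, p k - blockMass s f p true := by
  rw [← sum_fiberwise s f p, Fintype.sum_bool]
  simp only [blockMass]
  ring

lemma blockCoupling_nonneg (hp : ∀ k, 0 ≤ p k) (hr : ∀ l, 0 ≤ r l) (hc : ∀ i j, 0 ≤ c i j)
    (k : α) (l : β) : 0 ≤ blockCoupling s t f g p r c k l :=
  mul_nonneg (mul_nonneg (hc _ _) (div_nonneg (hp k) (blockMass_nonneg hp _)))
    (div_nonneg (hr l) (blockMass_nonneg hr _))

lemma blockCoupling_swap (k : α) (l : β) :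
    blockCoupling s t f g p r c k l = blockCoupling t s g f r p (fun j i => c i j) l k := by
  unfold blockCoupling
  ring

lemma sum_blockCoupling_fiber [Fintype ι] (hc : ∀ i j, 0 ≤ c i j)
    (hc_col : ∀ j, ∑ i, c i j = blockMass t g r j) (k : α) (j : κ) :
    ∑ l ∈ t with g l = j, blockCoupling s t f g p r c k l
      = c (f k) j * (p k / blockMass s f p (f k)) := by
  have hc_le : c (f k) j ≤ blockMass t g r j :=
    hc_col j ▸ single_le_sum (fun i _ => hc i j) (mem_univ (f k))
  calc ∑ l ∈ t with g l = j, blockCoupling s t f g p r c k l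
      = ∑ l ∈ t with g l = j,
          c (f k) j * (p k / blockMass s f p (f k)) * (r l / blockMass t g r j) :=
        sum_congr rfl fun l hl => by rw [blockCoupling, (mem_filter.1 hl).2]
    _ = c (f k) j * (p k / blockMass s f p (f k)) * (blockMass t g r j / blockMass t g r j) := by
        rw [← mul_sum, ← sum_div]
        rfl
    _ = c (f k) j * (p k / blockMass s f p (f k)) := by
        rw [mul_right_comm, mul_div_self_of_le (hc _ _) hc_le]

lemma sum_blockCoupling_fiber_of_blockMass_eq [Fintype ι] [Fintype κ] (hc : ∀ i j, 0 ≤ c i j)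
    (hc_row : ∀ i, ∑ j, c i j = blockMass s f p i) (hc_col : ∀ j, ∑ i, c i j = blockMass t g r j)
    {k : α} (hk : blockMass s f p (f k) = p k) (j : κ) :
    ∑ l ∈ t with g l = j, blockCoupling s t f g p r c k l = c (f k) j := by
  have hc_le : c (f k) j ≤ p k := by
    rw [← hk, ← hc_row]
    exact single_le_sum (fun j _ => hc (f k) j) (mem_univ j)
  rw [sum_blockCoupling_fiber hc hc_col, hk, mul_div_self_of_le (hc _ _) hc_le]

lemma sum_blockCoupling_right [Fintype ι] [Fintype κ] (hp : ∀ k, 0 ≤ p k)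
    (hp_supp : ∀ k ∉ s, p k = 0) (hc : ∀ i j, 0 ≤ c i j)
    (hc_row : ∀ i, ∑ j, c i j = blockMass s f p i) (hc_col : ∀ j, ∑ i, c i j = blockMass t g r j)
    (k : α) : ∑ l ∈ t, blockCoupling s t f g p r c k l = p k := by
  rw [← sum_fiberwise t g]
  simp only [sum_blockCoupling_fiber hc hc_col]
  rw [← sum_mul, hc_row]
  refine mul_div_cancel_of_imp' fun h => ?_
  by_cases hk : k ∈ s
  · exact le_antisymm (h ▸ le_blockMass hp hk) (hp k)
  · exact hp_supp k hk

lemma sum_blockCoupling_left [Fintype ι] [Fintype κ] (hr : ∀ l, 0 ≤ r l)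
    (hr_supp : ∀ l ∉ t, r l = 0) (hc : ∀ i j, 0 ≤ c i j)
    (hc_row : ∀ i, ∑ j, c i j = blockMass s f p i) (hc_col : ∀ j, ∑ i, c i j = blockMass t g r j)
    (l : β) : ∑ k ∈ s, blockCoupling s t f g p r c k l = r l := by
  simp only [blockCoupling_swap (c := c) _ l]
  exact sum_blockCoupling_right hr hr_supp (fun j i => hc i j) hc_col hc_row l

end BlockCoupling

section FrechetTable

def frechetLowerTable (a b : ℝ) : Bool → Bool → ℝ
  | true, true => max 0 (a + b - 1)
  | true, false => a - max 0 (a + b - 1)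
  | false, true => b - max 0 (a + b - 1)
  | false, false => 1 - a - b + max 0 (a + b - 1)

variable {a b : ℝ}

lemma frechetLowerTable_nonneg (ha₀ : 0 ≤ a) (ha₁ : a ≤ 1) (hb₀ : 0 ≤ b) (hb₁ : b ≤ 1) :
    ∀ i j, 0 ≤ frechetLowerTable a b i j := by
  rintro (_ | _) (_ | _) <;> simp only [frechetLowerTable, max_def] <;> split_ifs <;> linarith

lemma sum_frechetLowerTable_row (a b : ℝ) (i : Bool) :
    ∑ j, frechetLowerTable a b i j = cond i a (1 - a) := by
  cases i <;> simp only [Fintype.sum_bool, frechetLowerTable, cond] <;> ring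

lemma sum_frechetLowerTable_col (a b : ℝ) (j : Bool) :
    ∑ i, frechetLowerTable a b i j = cond j b (1 - b) := by
  cases j <;> simp only [Fintype.sum_bool, frechetLowerTable, cond] <;> ring

lemma sum_frechetLowerTable_row_eq_blockMass {α : Type*} {s : Finset α} {f : α → Bool}
    {p : α → ℝ} (hs : ∑ k ∈ s, p k = 1) (ha : blockMass s f p true = a) (i : Bool) :
    ∑ j, frechetLowerTable a b i j = blockMass s f p i := by
  rw [sum_frechetLowerTable_row]
  cases i
  · rw [blockMass_false_eq, hs, ha]; rfl
  · exact ha.symm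

lemma sum_frechetLowerTable_col_eq_blockMass {β : Type*} {t : Finset β} {g : β → Bool}
    {r : β → ℝ} (ht : ∑ l ∈ t, r l = 1) (hb : blockMass t g r true = b) (j : Bool) :
    ∑ i, frechetLowerTable a b i j = blockMass t g r j := by
  rw [sum_frechetLowerTable_col]
  cases j
  · rw [blockMass_false_eq, ht, hb]; rfl
  · exact hb.symm

end FrechetTable

theorem lower_frechet_sharp_general (J : ℕ) (y : ℕ) (hy : y < J)
    (S : Finset ℕ) (p1 p0 : ℕ → ℝ)
    (h1 : ∀ k, 0 ≤ p1 k) (h0 : ∀ l, 0 ≤ p0 l)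
    (hs1 : ∑ k ∈ Finset.range J, p1 k = 1) (hs0 : ∑ l ∈ Finset.range J, p0 l = 1)
    (h1supp : ∀ k, J ≤ k → p1 k = 0) (h0supp : ∀ l, J ≤ l → p0 l = 0) :
    ∃ q : ℕ → ℕ → ℝ,
      (∀ k l, 0 ≤ q k l) ∧
      (∀ k, ∑ l ∈ Finset.range J, q k l = p1 k) ∧
      (∀ l, ∑ k ∈ Finset.range J, q k l = p0 l) ∧
      ∑ l ∈ (Finset.range J).filter (· ∈ S), q y l
        = max 0 (p1 y + (∑ l ∈ (Finset.range J).filter (· ∈ S), p0 l) - 1) := by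
  set b := ∑ l ∈ (range J).filter (· ∈ S), p0 l
  let f : ℕ → Bool := fun k => decide (k = y)
  let g : ℕ → Bool := fun l => decide (l ∈ S)
  have ha : blockMass (range J) f p1 true = p1 y := by simp [blockMass, f, filter_eq', hy]
  have hb : blockMass (range J) g p0 true = b := by simp [blockMass, g, b]
  have hc := frechetLowerTable_nonneg (h1 y) (ha ▸ hs1 ▸ blockMass_le_sum h1 true)
    (hb ▸ blockMass_nonneg h0 true) (hb ▸ hs0 ▸ blockMass_le_sum h0 true)
  have hc_row := sum_frechetLowerTable_row_eq_blockMass (b := b) hs1 ha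
  have hc_col := sum_frechetLowerTable_col_eq_blockMass (a := p1 y) hs0 hb
  refine ⟨blockCoupling (range J) (range J) f g p1 p0 (frechetLowerTable (p1 y) b),
    blockCoupling_nonneg h1 h0 hc,
    sum_blockCoupling_right h1 (fun k hk => h1supp k (by simpa using hk)) hc hc_row hc_col,
    sum_blockCoupling_left h0 (fun l hl => h0supp l (by simpa using hl)) hc hc_row hc_col, ?_⟩
  have hS : (range J).filter (· ∈ S) = (range J).filter (g · = true) := by simp [g]
  rw [hS, sum_blockCoupling_fiber_of_blockMass_eq hc hc_row hc_col (by simpa [f] using ha)]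
  simp [f, frechetLowerTable]

/-- Sharpness of the lower Fréchet bound: there is a coupling of the prescribed
marginals attaining `pr(Y1 = y, Y0 ∈ S) = max(0, p1(y) + p0(S) - 1)`. -/
theorem lower_frechet_sharp (J : ℕ) (hJ : 2 ≤ J) (y : ℕ) (hy : y < J)
    (S : Finset ℕ) (p1 p0 : ℕ → ℝ)
    (h1 : ∀ k, 0 ≤ p1 k) (h0 : ∀ l, 0 ≤ p0 l)
    (hs1 : ∑ k ∈ Finset.range J, p1 k = 1) (hs0 : ∑ l ∈ Finset.range J, p0 l = 1)
    (h1supp : ∀ k, J ≤ k → p1 k = 0) (h0supp : ∀ l, J ≤ l → p0 l = 0)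
    (hpos : 0 < p1 y) :
    ∃ q : ℕ → ℕ → ℝ,
      (∀ k l, 0 ≤ q k l) ∧
      (∀ k, ∑ l ∈ Finset.range J, q k l = p1 k) ∧
      (∀ l, ∑ k ∈ Finset.range J, q k l = p0 l) ∧
      ∑ l ∈ (Finset.range J).filter (· ∈ S), q y l
        = max 0 (p1 y + (∑ l ∈ (Finset.range J).filter (· ∈ S), p0 l) - 1) :=
  lower_frechet_sharp_general J y hy S p1 p0 h1 h0 hs1 hs0 h1supp h0supp
end

section
/- Fix J ≥ 2, y ∈ {0,...,J-1}, a subset S ⊆ {0,...,J-1}, and probability mass functions p1, p0 on {0,...,J-1} with p1(y) > 0. There exists a joint distribution of (Y1, Y0) on {0,...,J-1}² with marginals p1 and p0 such that pr(Y1 = y, Y0 ∈ S) = min(p1(y), p0(S)), where p0(S) = Σ_{ℓ∈S} p0(ℓ). -/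
open Finset

private lemma div_mul_cancel_cond (x r : ℝ) (h : r = 0 → x = 0) : x / r * r = x := by
  rcases eq_or_ne r 0 with h0 | h0
  · simp [h0, h h0]
  · field_simp

/-- Sharpness of the upper Fréchet bound: there is a coupling of the prescribed
marginals attaining `pr(Y1 = y, Y0 ∈ S) = min(p1(y), p0(S))`. -/
theorem upper_frechet_sharp (J : ℕ) (hJ : 2 ≤ J) (y : ℕ) (hy : y < J)
    (S : Finset ℕ) (p1 p0 : ℕ → ℝ)
    (h1 : ∀ k, 0 ≤ p1 k) (h0 : ∀ l, 0 ≤ p0 l)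
    (hs1 : ∑ k ∈ Finset.range J, p1 k = 1) (hs0 : ∑ l ∈ Finset.range J, p0 l = 1)
    (h1supp : ∀ k, J ≤ k → p1 k = 0) (h0supp : ∀ l, J ≤ l → p0 l = 0)
    (hpos : 0 < p1 y) :
    ∃ q : ℕ → ℕ → ℝ,
      (∀ k l, 0 ≤ q k l) ∧
      (∀ k, ∑ l ∈ Finset.range J, q k l = p1 k) ∧
      (∀ l, ∑ k ∈ Finset.range J, q k l = p0 l) ∧
      ∑ l ∈ (Finset.range J).filter (· ∈ S), q y l
        = min (p1 y) (∑ l ∈ (Finset.range J).filter (· ∈ S), p0 l) := by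
  have hyJ : y ∈ Finset.range J := mem_range.2 hy
  set T : Finset ℕ := (Finset.range J).filter (· ∈ S) with hT
  set A : ℝ := p1 y with hA
  set B : ℝ := ∑ l ∈ T, p0 l with hB
  set m : ℝ := min A B with hm
  have hA0 : 0 < A := hpos
  have hA1 : A ≤ 1 := by
    have := Finset.single_le_sum (f := p1) (fun i _ => h1 i) hyJ
    linarith [hs1]
  have hB0 : 0 ≤ B := Finset.sum_nonneg fun l _ => h0 l
  have hB1 : B ≤ 1 := by
    have := Finset.sum_le_sum_of_subset_of_nonneg
      (Finset.filter_subset (· ∈ S) (Finset.range J)) (fun i _ _ => h0 i)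
    rw [hs0] at this
    exact this
  have hm0 : 0 ≤ m := le_min hA0.le hB0
  have hcell4 : 0 ≤ 1 - A - B + m := by
    rcases le_total A B with hAB | hAB
    · rw [hm, min_eq_left hAB]; linarith
    · rw [hm, min_eq_right hAB]; linarith
  have hmA : m ≤ A := min_le_left _ _
  have hmB : m ≤ B := min_le_right _ _
  -- complement sums
  have hrowrest : ∑ k ∈ (Finset.range J).filter (fun k => ¬ k = y), p1 k = 1 - A := by
    have h := Finset.sum_filter_add_sum_filter_not (Finset.range J) (fun k => k = y) p1
    have h2 : ∑ k ∈ (Finset.range J).filter (fun k => k = y), p1 k = A := by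
      rw [Finset.filter_eq' (Finset.range J) y, if_pos hyJ, Finset.sum_singleton]
    rw [hs1] at h
    linarith
  have hcolrest : ∑ l ∈ (Finset.range J).filter (fun l => ¬ l ∈ S), p0 l = 1 - B := by
    have h := Finset.sum_filter_add_sum_filter_not (Finset.range J) (fun l => l ∈ S) p0
    rw [hs0] at h
    linarith
  -- the cell functions
  set cS : ℕ → ℝ := fun k => if k = y then m else B - m with hcS
  set cN : ℕ → ℝ := fun k => if k = y then A - m else 1 - A - B + m with hcN
  set rr : ℕ → ℝ := fun k => if k = y then A else 1 - A with hrrdef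
  set cl : ℕ → ℝ := fun l => if l ∈ S then B else 1 - B with hcldef
  have hrr0 : ∀ k, 0 ≤ rr k := by
    intro k; by_cases hk : k = y <;> simp [hrrdef, hk] <;> linarith
  have hcl0 : ∀ l, 0 ≤ cl l := by
    intro l; by_cases hl : l ∈ S <;> simp [hcldef, hl] <;> linarith
  have hrr : ∀ k, rr k = 0 → p1 k = 0 := by
    intro k h
    by_cases hk : k = y
    · rw [hrrdef] at h; simp [hk] at h; exact absurd h (ne_of_gt hA0)
    · rw [hrrdef] at h; simp [hk] at h
      by_cases hkJ : k < J
      · have hz : ∑ k ∈ (Finset.range J).filter (fun k => ¬ k = y), p1 k = 0 := by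
          rw [hrowrest]; linarith
        exact (Finset.sum_eq_zero_iff_of_nonneg (fun i _ => h1 i)).1 hz k
          (Finset.mem_filter.2 ⟨mem_range.2 hkJ, hk⟩)
      · exact h1supp k (le_of_not_gt hkJ)
  have hcl : ∀ l, cl l = 0 → p0 l = 0 := by
    intro l h
    by_cases hlJ : l < J
    · by_cases hl : l ∈ S
      · rw [hcldef] at h; simp [hl] at h
        have hz : ∑ l ∈ T, p0 l = 0 := by rw [← hB]; exact h
        exact (Finset.sum_eq_zero_iff_of_nonneg (fun i _ => h0 i)).1 hz l
          (Finset.mem_filter.2 ⟨mem_range.2 hlJ, hl⟩)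
      · rw [hcldef] at h; simp [hl] at h
        have hz : ∑ l ∈ (Finset.range J).filter (fun l => ¬ l ∈ S), p0 l = 0 := by
          rw [hcolrest]; linarith
        exact (Finset.sum_eq_zero_iff_of_nonneg (fun i _ => h0 i)).1 hz l
          (Finset.mem_filter.2 ⟨mem_range.2 hlJ, hl⟩)
    · exact h0supp l (le_of_not_gt hlJ)
  -- key identities
  have hkey : ∀ k, cS k * (B / B) + cN k * ((1 - B) / (1 - B)) = rr k := by
    intro k
    rcases eq_or_ne B 0 with hB' | hB'
    · have hm' : m = 0 := by rw [hm, hB', min_eq_right hA0.le]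
      by_cases hk : k = y <;> simp [hcS, hcN, hrrdef, hB', hm', hk] <;> ring
    · rcases eq_or_ne B 1 with hB'' | hB''
      · have hm' : m = A := by rw [hm, hB'', min_eq_left hA1]
        by_cases hk : k = y <;> simp [hcS, hcN, hrrdef, hB'', hm', hk] <;> ring
      · rw [div_self hB', div_self (sub_ne_zero_of_ne (Ne.symm hB''))]
        by_cases hk : k = y <;> simp [hcS, hcN, hrrdef, hk] <;> ring
  have hkey2 : ∀ l, (if l ∈ S then m else A - m) * (A / A)
      + (if l ∈ S then B - m else 1 - A - B + m) * ((1 - A) / (1 - A)) = cl l := by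
    intro l
    rw [div_self (ne_of_gt hA0)]
    rcases eq_or_ne A 1 with hA' | hA'
    · have hm' : m = B := by rw [hm, hA', min_eq_right hB1]
      by_cases hl : l ∈ S <;> simp [hcldef, hA', hm', hl] <;> ring
    · rw [div_self (sub_ne_zero_of_ne (Ne.symm hA'))]
      by_cases hl : l ∈ S <;> simp [hcldef, hl] <;> ring
  -- the coupling
  refine ⟨fun k l => (if l ∈ S then cS k else cN k) * (p1 k / rr k) * (p0 l / cl l),
    ?_, ?_, ?_, ?_⟩
  · intro k l
    have hcell : 0 ≤ (if l ∈ S then cS k else cN k) := by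
      by_cases hl : l ∈ S <;> by_cases hk : k = y <;>
        simp [hcS, hcN, hl, hk] <;> linarith
    exact mul_nonneg (mul_nonneg hcell (div_nonneg (h1 k) (hrr0 k)))
      (div_nonneg (h0 l) (hcl0 l))
  · -- row sums
    intro k
    have e1 : ∑ l ∈ T, (if l ∈ S then cS k else cN k) * (p1 k / rr k) * (p0 l / cl l)
        = cS k * (p1 k / rr k) * (B / B) := by
      have hterm : ∀ l ∈ T, (if l ∈ S then cS k else cN k) * (p1 k / rr k) * (p0 l / cl l)
          = cS k * (p1 k / rr k) / B * p0 l := by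
        intro l hl
        have hlS : l ∈ S := (Finset.mem_filter.1 hl).2
        simp only [hcldef, if_pos hlS]
        ring
      rw [Finset.sum_congr rfl hterm, ← Finset.mul_sum, ← hB]
      ring
    have e2 : ∑ l ∈ (Finset.range J).filter (fun l => ¬ l ∈ S),
          (if l ∈ S then cS k else cN k) * (p1 k / rr k) * (p0 l / cl l)
        = cN k * (p1 k / rr k) * ((1 - B) / (1 - B)) := by
      have hterm : ∀ l ∈ (Finset.range J).filter (fun l => ¬ l ∈ S),
          (if l ∈ S then cS k else cN k) * (p1 k / rr k) * (p0 l / cl l)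
          = cN k * (p1 k / rr k) / (1 - B) * p0 l := by
        intro l hl
        have hlS : ¬ l ∈ S := (Finset.mem_filter.1 hl).2
        simp only [hcldef, if_neg hlS]
        ring
      rw [Finset.sum_congr rfl hterm, ← Finset.mul_sum, hcolrest]
      ring
    have hsplit := Finset.sum_filter_add_sum_filter_not (Finset.range J) (fun l => l ∈ S)
      (fun l => (if l ∈ S then cS k else cN k) * (p1 k / rr k) * (p0 l / cl l))
    rw [← hsplit, ← hT] at *
    rw [e1, e2]
    have : cS k * (p1 k / rr k) * (B / B) + cN k * (p1 k / rr k) * ((1 - B) / (1 - B))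
        = p1 k / rr k * (cS k * (B / B) + cN k * ((1 - B) / (1 - B))) := by ring
    rw [this, hkey k]
    exact div_mul_cancel_cond (p1 k) (rr k) (hrr k)
  · -- column sums
    intro l
    have hsplit := Finset.sum_filter_add_sum_filter_not (Finset.range J) (fun k => k = y)
      (fun k => (if l ∈ S then cS k else cN k) * (p1 k / rr k) * (p0 l / cl l))
    have e1 : ∑ k ∈ (Finset.range J).filter (fun k => k = y),
          (if l ∈ S then cS k else cN k) * (p1 k / rr k) * (p0 l / cl l)
        = (if l ∈ S then m else A - m) * (A / A) * (p0 l / cl l) := by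
      rw [Finset.filter_eq' (Finset.range J) y, if_pos hyJ, Finset.sum_singleton]
      simp only [hcS, hcN, hrrdef, if_pos rfl, ← hA]
    have e2 : ∑ k ∈ (Finset.range J).filter (fun k => ¬ k = y),
          (if l ∈ S then cS k else cN k) * (p1 k / rr k) * (p0 l / cl l)
        = (if l ∈ S then B - m else 1 - A - B + m) * ((1 - A) / (1 - A)) * (p0 l / cl l) := by
      have hterm : ∀ k ∈ (Finset.range J).filter (fun k => ¬ k = y),
          (if l ∈ S then cS k else cN k) * (p1 k / rr k) * (p0 l / cl l)
          = (if l ∈ S then B - m else 1 - A - B + m) * (p0 l / cl l) / (1 - A) * p1 k := by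
        intro k hk
        have hky : ¬ k = y := (Finset.mem_filter.1 hk).2
        simp only [hcS, hcN, hrrdef, if_neg hky]
        by_cases hl : l ∈ S <;> simp [hl] <;> ring
      rw [Finset.sum_congr rfl hterm, ← Finset.mul_sum, hrowrest]
      ring
    rw [← hsplit, e1, e2]
    have : (if l ∈ S then m else A - m) * (A / A) * (p0 l / cl l)
        + (if l ∈ S then B - m else 1 - A - B + m) * ((1 - A) / (1 - A)) * (p0 l / cl l)
        = p0 l / cl l * ((if l ∈ S then m else A - m) * (A / A)
            + (if l ∈ S then B - m else 1 - A - B + m) * ((1 - A) / (1 - A))) := by ring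
    rw [this, hkey2 l]
    exact div_mul_cancel_cond (p0 l) (cl l) (hcl l)
  · -- the Fréchet bound value
    have hterm : ∀ l ∈ T, (if l ∈ S then cS y else cN y) * (p1 y / rr y) * (p0 l / cl l)
        = m / B * p0 l := by
      intro l hl
      have hlS : l ∈ S := (Finset.mem_filter.1 hl).2
      simp only [hcS, hcN, hrrdef, hcldef, if_pos hlS, if_pos rfl, ← hA]
      rw [div_self (ne_of_gt hA0)]
      ring
    rw [Finset.sum_congr rfl hterm, ← Finset.mul_sum, ← hB]
    rcases eq_or_ne B 0 with hB' | hB'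
    · have hm' : m = 0 := by rw [hm, hB', min_eq_right hA0.le]
      rw [hB', hm']
      try simp
      try ring
    · rw [div_mul_cancel_cond m B (fun h => absurd h hB')]
end

section
/- Let Y1, Y0 be random variables valued in {0,...,J-1} with Y0 ≤ Y1 almost surely, and let y', y ∈ {0,...,J-1} with y' < y. Then pr(Y1 = y, Y0 = y') ≤ min over h with y' ≤ h < y of (pr(Y0 ≤ h) - pr(Y1 ≤ h)), and also pr(Y1 = y, Y0 = y') ≤ min(pr(Y1 = y), pr(Y0 = y')). -/
open MeasureTheory Finset

/-- Upper bound on the joint probability `pr(Y1 = y, Y0 = y')` under monotonicity. -/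
theorem joint_upper_bound_mono {Ω : Type*} [MeasurableSpace Ω] (μ : Measure Ω)
    [IsProbabilityMeasure μ] (J : ℕ) (Y1 Y0 : Ω → ℕ)
    (hY1m : Measurable Y1) (hY0m : Measurable Y0)
    (hY1 : ∀ ω, Y1 ω < J) (hY0 : ∀ ω, Y0 ω < J)
    (hmono : ∀ᵐ ω ∂μ, Y0 ω ≤ Y1 ω)
    (y' y : ℕ) (hy' : y' < J) (hy : y < J) (hlt : y' < y) :
    (∀ h, y' ≤ h → h < y →
      pr μ {ω | Y1 ω = y ∧ Y0 ω = y'}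
        ≤ pr μ {ω | Y0 ω ≤ h} - pr μ {ω | Y1 ω ≤ h}) ∧
    pr μ {ω | Y1 ω = y ∧ Y0 ω = y'}
      ≤ min (pr μ {ω | Y1 ω = y}) (pr μ {ω | Y0 ω = y'}) := by
  constructor
  · intro h hyh hhy
    have hCm : MeasurableSet {ω | Y1 ω ≤ h} := hY1m measurableSet_Iic
    have hdisj : Disjoint {ω | Y1 ω = y ∧ Y0 ω = y'} {ω | Y1 ω ≤ h} := by
      rw [Set.disjoint_left]
      rintro ω ⟨h1, _⟩ hle
      exact absurd (h1 ▸ hle) (not_le.mpr hhy)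
    have key : μ {ω | Y1 ω = y ∧ Y0 ω = y'} + μ {ω | Y1 ω ≤ h} ≤ μ {ω | Y0 ω ≤ h} := by
      rw [← measure_union hdisj hCm]
      apply measure_mono_ae
      filter_upwards [hmono] with ω hm hω
      rcases hω with ⟨_, h0⟩ | hle
      · exact h0.le.trans hyh
      · exact le_trans hm hle
    have hfin : ∀ s : Set Ω, μ s ≠ ⊤ := fun s => measure_ne_top μ s
    have := ENNReal.toReal_mono (hfin _) key
    rw [ENNReal.toReal_add (hfin _) (hfin _)] at this
    simp only [pr]
    linarith
  · rw [le_min_iff]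
    exact ⟨ENNReal.toReal_mono (measure_ne_top μ _) (measure_mono fun ω hω => hω.1),
      ENNReal.toReal_mono (measure_ne_top μ _) (measure_mono fun ω hω => hω.2)⟩
end

section
/- Let Y1, Y0 be random variables valued in {0,...,J-1} with Y0 ≤ Y1 almost surely, and let y', y ∈ {0,...,J-1} with y' ≤ y. Then pr(Y1 = y, Y0 = y') ≥ pr(Y1 = y) + pr(Y0 = y') - (pr(Y0 ≤ y) - pr(Y1 < y')). -/
open MeasureTheory Finset

/-!
Let `A = {Y1 = y}`, `B = {Y0 = y'}`, `C = {Y1 < y'}` and `S = {Y0 ≤ y}`. Under `Y0 ≤ Y1` and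
`y' ≤ y`, the event `C` is almost surely disjoint from `A ∪ B`, and `A ∪ B ∪ C ⊆ S` almost surely.
Inclusion–exclusion for `A ∪ B` then gives `μ A + μ B + μ C ≤ μ (A ∩ B) + μ S`.
-/

theorem measureReal_add_add_le_measureReal_inter_add {Ω : Type*} [MeasurableSpace Ω]
    {μ : Measure Ω} [IsFiniteMeasure μ] {A B C S : Set Ω} (hB : NullMeasurableSet B μ)
    (hC : NullMeasurableSet C μ) (hdisj : AEDisjoint μ (A ∪ B) C)
    (hsub : (A ∪ B ∪ C : Set Ω) ≤ᵐ[μ] S) :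
    μ.real A + μ.real B + μ.real C ≤ μ.real (A ∩ B) + μ.real S := by
  have hS : μ.real (A ∪ B ∪ C) ≤ μ.real S :=
    ENNReal.toReal_mono (measure_ne_top μ S) (measure_mono_ae hsub)
  linarith [measureReal_union_add_inter₀ (μ := μ) (s := A) hB, measureReal_union₀ hC hdisj]

theorem joint_lower_bound_mono_general {Ω : Type*} [MeasurableSpace Ω] (μ : Measure Ω)
    [IsProbabilityMeasure μ] (Y1 Y0 : Ω → ℕ)
    (hY1m : Measurable Y1) (hY0m : Measurable Y0)
    (hmono : ∀ᵐ ω ∂μ, Y0 ω ≤ Y1 ω)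
    (y' y : ℕ) (hle : y' ≤ y) :
    pr μ {ω | Y1 ω = y} + pr μ {ω | Y0 ω = y'}
        - (pr μ {ω | Y0 ω ≤ y} - pr μ {ω | Y1 ω < y'})
      ≤ pr μ {ω | Y1 ω = y ∧ Y0 ω = y'} := by
  have hB : NullMeasurableSet {ω | Y0 ω = y'} μ :=
    (hY0m (measurableSet_singleton y')).nullMeasurableSet
  have hC : NullMeasurableSet {ω | Y1 ω < y'} μ := (hY1m measurableSet_Iio).nullMeasurableSet
  have hdisj : AEDisjoint μ ({ω | Y1 ω = y} ∪ {ω | Y0 ω = y'}) {ω | Y1 ω < y'} := by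
    refine measure_mono_null ?_ (ae_iff.mp hmono)
    rintro ω ⟨(h : Y1 ω = y) | (h : Y0 ω = y'), (hlt : Y1 ω < y')⟩ <;>
      change ¬Y0 ω ≤ Y1 ω <;> omega
  have hsub : ({ω | Y1 ω = y} ∪ {ω | Y0 ω = y'} ∪ {ω | Y1 ω < y'} : Set Ω) ≤ᵐ[μ]
      {ω | Y0 ω ≤ y} := by
    filter_upwards [hmono] with ω hω
    rintro (((h : Y1 ω = y) | (h : Y0 ω = y')) | (h : Y1 ω < y')) <;>
      change Y0 ω ≤ y <;> omega
  have key := measureReal_add_add_le_measureReal_inter_add hB hC hdisj hsub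
  simp only [pr, ← measureReal_def, Set.ofPred_and]
  linarith

/-- Lower bound on the joint probability `pr(Y1 = y, Y0 = y')` under monotonicity. -/
theorem joint_lower_bound_mono {Ω : Type*} [MeasurableSpace Ω] (μ : Measure Ω)
    [IsProbabilityMeasure μ] (J : ℕ) (Y1 Y0 : Ω → ℕ)
    (hY1m : Measurable Y1) (hY0m : Measurable Y0)
    (hY1 : ∀ ω, Y1 ω < J) (hY0 : ∀ ω, Y0 ω < J)
    (hmono : ∀ᵐ ω ∂μ, Y0 ω ≤ Y1 ω)
    (y' y : ℕ) (hy' : y' < J) (hy : y < J) (hle : y' ≤ y) :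
    pr μ {ω | Y1 ω = y} + pr μ {ω | Y0 ω = y'}
        - (pr μ {ω | Y0 ω ≤ y} - pr μ {ω | Y1 ω < y'})
      ≤ pr μ {ω | Y1 ω = y ∧ Y0 ω = y'} :=
  joint_lower_bound_mono_general μ Y1 Y0 hY1m hY0m hmono y' y hle
end

section
/- Let Y1, Y0 be random variables valued in {0,...,J-1} with Y0 ≤ Y1 almost surely, and let y ∈ {0,...,J-1}. Then pr(Y1 = y, Y0 ≠ y) = pr(Y1 = y) - pr(Y1 = y, Y0 = y), and consequently pr(Y1 = y, Y0 ≠ y) ≤ min(pr(Y1 = y), Σ_{j=0}^{y-1}(pr(Y0 = j) - pr(Y1 = j))). -/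
open MeasureTheory Finset

/-- Under monotonicity, `pr(Y1 = y, Y0 ≠ y)` decomposes and is bounded above by
`min(pr(Y1 = y), Σ_{j<y}(pr(Y0 = j) - pr(Y1 = j)))`. -/
theorem pn_neq_upper_bound_mono {Ω : Type*} [MeasurableSpace Ω] (μ : Measure Ω)
    [IsProbabilityMeasure μ] (J : ℕ) (Y1 Y0 : Ω → ℕ)
    (hY1m : Measurable Y1) (hY0m : Measurable Y0)
    (hY1 : ∀ ω, Y1 ω < J) (hY0 : ∀ ω, Y0 ω < J)
    (hmono : ∀ᵐ ω ∂μ, Y0 ω ≤ Y1 ω)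
    (y : ℕ) (hy : y < J) :
    pr μ {ω | Y1 ω = y ∧ Y0 ω ≠ y}
        = pr μ {ω | Y1 ω = y} - pr μ {ω | Y1 ω = y ∧ Y0 ω = y} ∧
    pr μ {ω | Y1 ω = y ∧ Y0 ω ≠ y}
      ≤ min (pr μ {ω | Y1 ω = y})
          (∑ j ∈ Finset.range y, (pr μ {ω | Y0 ω = j} - pr μ {ω | Y1 ω = j})) := by
  have m1 : ∀ n : ℕ, MeasurableSet {ω | Y1 ω = n} := fun n => hY1m (measurableSet_singleton n)
  have m0 : ∀ n : ℕ, MeasurableSet {ω | Y0 ω = n} := fun n => hY0m (measurableSet_singleton n)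
  have mA : MeasurableSet {ω | Y1 ω = y ∧ Y0 ω ≠ y} := (m1 y).inter ((m0 y).compl)
  have mE : MeasurableSet {ω | Y1 ω = y ∧ Y0 ω = y} := (m1 y).inter (m0 y)
  have mB : MeasurableSet {ω | Y1 ω < y} := hY1m measurableSet_Iio
  have mC : MeasurableSet {ω | Y0 ω < y} := hY0m measurableSet_Iio
  -- Part 1
  have hu : {ω | Y1 ω = y} = {ω | Y1 ω = y ∧ Y0 ω = y} ∪ {ω | Y1 ω = y ∧ Y0 ω ≠ y} := by
    ext ω; by_cases h : Y0 ω = y <;> simp [h]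
  have hd : Disjoint {ω : Ω | Y1 ω = y ∧ Y0 ω = y} {ω | Y1 ω = y ∧ Y0 ω ≠ y} := by
    rw [Set.disjoint_left]; rintro ω ⟨_, h⟩ ⟨_, h'⟩; exact h' h
  have key : pr μ {ω | Y1 ω = y}
      = pr μ {ω | Y1 ω = y ∧ Y0 ω = y} + pr μ {ω | Y1 ω = y ∧ Y0 ω ≠ y} := by
    rw [pr, hu, measure_union hd mA,
      ENNReal.toReal_add (measure_ne_top μ _) (measure_ne_top μ _)]; rfl
  refine ⟨by linarith, le_min ?_ ?_⟩
  · have h1 : pr μ {ω | Y1 ω = y ∧ Y0 ω = y} ≥ 0 := ENNReal.toReal_nonneg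
    linarith
  · -- sums equal probabilities of strict inequality events
    have hsum0 : ∑ j ∈ Finset.range y, pr μ {ω | Y0 ω = j} = pr μ {ω | Y0 ω < y} := by
      rw [pr, show {ω | Y0 ω < y} = ⋃ j ∈ Finset.range y, {ω | Y0 ω = j} by
          ext ω; simp [eq_comm],
        measure_biUnion_finset (fun i _ j _ hij => by
          rw [Function.onFun, Set.disjoint_left]; rintro ω rfl h; exact hij h)
          (fun j _ => m0 j),
        ENNReal.toReal_sum (fun j _ => measure_ne_top μ _)]
      rfl
    have hsum1 : ∑ j ∈ Finset.range y, pr μ {ω | Y1 ω = j} = pr μ {ω | Y1 ω < y} := by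
      rw [pr, show {ω | Y1 ω < y} = ⋃ j ∈ Finset.range y, {ω | Y1 ω = j} by
          ext ω; simp [eq_comm],
        measure_biUnion_finset (fun i _ j _ hij => by
          rw [Function.onFun, Set.disjoint_left]; rintro ω rfl h; exact hij h)
          (fun j _ => m1 j),
        ENNReal.toReal_sum (fun j _ => measure_ne_top μ _)]
      rfl
    rw [Finset.sum_sub_distrib, hsum0, hsum1]
    -- A ∪ B ⊆ᵐ C
    have hdAB : Disjoint {ω : Ω | Y1 ω = y ∧ Y0 ω ≠ y} {ω | Y1 ω < y} := by
      rw [Set.disjoint_left]; rintro ω ⟨h, _⟩ h'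
      exact absurd (h ▸ h') (lt_irrefl y)
    have hsub : ({ω | Y1 ω = y ∧ Y0 ω ≠ y} ∪ {ω | Y1 ω < y} : Set Ω) ≤ᵐ[μ] {ω | Y0 ω < y} := by
      filter_upwards [hmono] with ω hω h
      rcases h with ⟨h1, h2⟩ | h1
      · exact lt_of_le_of_ne (h1 ▸ hω) h2
      · exact lt_of_le_of_lt hω h1
    have hle : μ {ω | Y1 ω = y ∧ Y0 ω ≠ y} + μ {ω | Y1 ω < y} ≤ μ {ω | Y0 ω < y} := by
      rw [← measure_union hdAB mB]
      exact measure_mono_ae hsub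
    have := ENNReal.toReal_le_toReal
      (by exact ENNReal.add_ne_top.2 ⟨measure_ne_top μ _, measure_ne_top μ _⟩)
      (measure_ne_top μ _) |>.mpr hle
    rw [ENNReal.toReal_add (measure_ne_top μ _) (measure_ne_top μ _)] at this
    simp only [pr]
    linarith
end

section
/- Fix J ≥ 2, y', y ∈ {0,...,J-1} with y' < y, and probability mass functions p1, p0 on {0,...,J-1} satisfying Σ_{j≤k} p1(j) ≤ Σ_{j≤k} p0(j) for all k (stochastic dominance of p1 over p0). Then there exists a joint distribution of (Y1, Y0) with marginals p1, p0, supported on {(k,ℓ): k ≥ ℓ}, such that pr(Y1 = y, Y0 = y') = min over y' ≤ h < y of (min(p1(y), p0(y'), Σ_{j≤h}(p0(j) - p1(j)))). -/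
open Finset

lemma clamp_diff (a b x y : ℝ) (hxy : x ≤ y) (hab : a ≤ b) :
    max 0 (min b y - max a x) = max a (min b y) - max a (min b x) := by
  simp only [max_def, min_def]
  split_ifs <;> linarith

lemma clamp_sum (G : ℕ → ℝ) (J : ℕ) (a b : ℝ) (hmono : Monotone G)
    (hab : a ≤ b) (ha : G 0 ≤ a) (hb : b ≤ G J) :
    ∑ l ∈ Finset.range J, max 0 (min b (G (l + 1)) - max a (G l)) = b - a := by
  have hterm : ∀ l ∈ Finset.range J, max 0 (min b (G (l + 1)) - max a (G l))
      = max a (min b (G (l + 1))) - max a (min b (G l)) := fun l _ =>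
    clamp_diff a b (G l) (G (l + 1)) (hmono (Nat.le_succ l)) hab
  rw [Finset.sum_congr rfl hterm, Finset.sum_range_sub (fun l => max a (min b (G l)))]
  rw [min_eq_left hb, max_eq_right hab, min_eq_right (le_trans ha hab), max_eq_left ha]

/-- Sharpness of the upper bound under monotonicity: a monotone coupling of the
stochastically ordered marginals attaining the upper bound on `pr(Y1 = y, Y0 = y')`. -/
theorem upper_bound_sharp_mono (J : ℕ) (hJ : 2 ≤ J) (y' y : ℕ)
    (hy' : y' < J) (hy : y < J) (hlt : y' < y)
    (p1 p0 : ℕ → ℝ)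
    (h1 : ∀ k, 0 ≤ p1 k) (h0 : ∀ l, 0 ≤ p0 l)
    (hs1 : ∑ k ∈ Finset.range J, p1 k = 1) (hs0 : ∑ l ∈ Finset.range J, p0 l = 1)
    (h1supp : ∀ k, J ≤ k → p1 k = 0) (h0supp : ∀ l, J ≤ l → p0 l = 0)
    (hdom : ∀ k, ∑ j ∈ Finset.range (k + 1), p1 j ≤ ∑ j ∈ Finset.range (k + 1), p0 j) :
    ∃ q : ℕ → ℕ → ℝ,
      (∀ k l, 0 ≤ q k l) ∧
      (∀ k, ∑ l ∈ Finset.range J, q k l = p1 k) ∧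
      (∀ l, ∑ k ∈ Finset.range J, q k l = p0 l) ∧
      (∀ k l, k < l → q k l = 0) ∧
      q y y' = min (p1 y) (min (p0 y')
        ((Finset.Ico y' y).inf' (Finset.nonempty_Ico.mpr hlt)
          (fun h => ∑ j ∈ Finset.range (h + 1), (p0 j - p1 j)))) := by
  classical
  set D : ℝ := (Finset.Ico y' y).inf' (Finset.nonempty_Ico.mpr hlt)
      (fun h => ∑ j ∈ Finset.range (h + 1), (p0 j - p1 j)) with hDdef
  set M : ℝ := min (p1 y) (min (p0 y') D) with hMdef
  set A : ℕ → ℝ := fun m => ∑ j ∈ Finset.range m, p1 j with hAdef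
  set B : ℕ → ℝ := fun m => ∑ j ∈ Finset.range m, p0 j with hBdef
  have hAB : ∀ m, A m ≤ B m := by
    intro m
    cases m with
    | zero => simp [hAdef, hBdef]
    | succ n => exact hdom n
  have hAmono : Monotone A := fun m n h =>
    Finset.sum_le_sum_of_subset_of_nonneg (Finset.range_subset_range.mpr h)
      (fun j _ _ => h1 j)
  have hBmono : Monotone B := fun m n h =>
    Finset.sum_le_sum_of_subset_of_nonneg (Finset.range_subset_range.mpr h)
      (fun j _ _ => h0 j)
  have hAstab : ∀ m, A (J + m) = A J := by
    intro m
    induction m with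
    | zero => rfl
    | succ n ih =>
      have h2 : A (J + n + 1) = A (J + n) + p1 (J + n) := Finset.sum_range_succ p1 (J + n)
      have h3 : J + (n + 1) = J + n + 1 := rfl
      rw [h3, h2, ih, h1supp (J + n) (Nat.le_add_right J n), add_zero]
  have hBstab : ∀ m, B (J + m) = B J := by
    intro m
    induction m with
    | zero => rfl
    | succ n ih =>
      have h2 : B (J + n + 1) = B (J + n) + p0 (J + n) := Finset.sum_range_succ p0 (J + n)
      have h3 : J + (n + 1) = J + n + 1 := rfl
      rw [h3, h2, ih, h0supp (J + n) (Nat.le_add_right J n), add_zero]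
  have hAJ : A J = 1 := hs1
  have hBJ : B J = 1 := hs0
  have hA1 : ∀ m, A m ≤ 1 := by
    intro m
    calc A m ≤ A (J + m) := hAmono (Nat.le_add_left m J)
      _ = A J := hAstab m
      _ = 1 := hAJ
  have hB1 : ∀ m, B m ≤ 1 := by
    intro m
    calc B m ≤ B (J + m) := hBmono (Nat.le_add_left m J)
      _ = B J := hBstab m
      _ = 1 := hBJ
  have hD0 : 0 ≤ D := by
    rw [hDdef]
    apply Finset.le_inf'
    intro h hh
    rw [Finset.sum_sub_distrib]
    have h2 := hAB (h + 1)
    simp only [hAdef, hBdef] at h2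
    linarith
  have hMp1 : M ≤ p1 y := min_le_left _ _
  have hMp0 : M ≤ p0 y' := le_trans (min_le_right _ _) (min_le_left _ _)
  have hMD : M ≤ D := le_trans (min_le_right _ _) (min_le_right _ _)
  have hM0 : 0 ≤ M := le_min (h1 y) (le_min (h0 y') hD0)
  have hDle : ∀ h, y' ≤ h → h < y → M ≤ B (h + 1) - A (h + 1) := by
    intro h h1h h2h
    have h3 : D ≤ ∑ j ∈ Finset.range (h + 1), (p0 j - p1 j) := by
      rw [hDdef]
      exact Finset.inf'_le _ (Finset.mem_Ico.mpr ⟨h1h, h2h⟩)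
    rw [Finset.sum_sub_distrib] at h3
    simp only [hAdef, hBdef]
    linarith
  set p1' : ℕ → ℝ := fun k => p1 k - (if k = y then M else 0) with hp1'def
  set p0' : ℕ → ℝ := fun l => p0 l - (if l = y' then M else 0) with hp0'def
  have h1' : ∀ k, 0 ≤ p1' k := by
    intro k
    simp only [hp1'def]
    split_ifs with h
    · subst h; linarith
    · simpa using h1 k
  have h0' : ∀ l, 0 ≤ p0' l := by
    intro l
    simp only [hp0'def]
    split_ifs with h
    · subst h; linarith
    · simpa using h0 l
  set F1 : ℕ → ℝ := fun m => ∑ j ∈ Finset.range m, p1' j with hF1def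
  set F0 : ℕ → ℝ := fun m => ∑ j ∈ Finset.range m, p0' j with hF0def
  have hF1A : ∀ m, F1 m = A m - (if y < m then M else 0) := by
    intro m
    simp only [hF1def, hp1'def, hAdef, Finset.sum_sub_distrib]
    congr 1
    rw [Finset.sum_ite_eq' (Finset.range m) y (fun _ => M)]
    simp [Finset.mem_range]
  have hF0B : ∀ m, F0 m = B m - (if y' < m then M else 0) := by
    intro m
    simp only [hF0def, hp0'def, hBdef, Finset.sum_sub_distrib]
    congr 1
    rw [Finset.sum_ite_eq' (Finset.range m) y' (fun _ => M)]
    simp [Finset.mem_range]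
  have hF1mono : Monotone F1 := fun m n h =>
    Finset.sum_le_sum_of_subset_of_nonneg (Finset.range_subset_range.mpr h)
      (fun j _ _ => h1' j)
  have hF0mono : Monotone F0 := fun m n h =>
    Finset.sum_le_sum_of_subset_of_nonneg (Finset.range_subset_range.mpr h)
      (fun j _ _ => h0' j)
  have hF1nonneg : ∀ m, 0 ≤ F1 m := fun m => Finset.sum_nonneg (fun j _ => h1' j)
  have hF0nonneg : ∀ m, 0 ≤ F0 m := fun m => Finset.sum_nonneg (fun j _ => h0' j)
  have hF10 : F1 0 = 0 := by simp [hF1def]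
  have hF00 : F0 0 = 0 := by simp [hF0def]
  have hF1J : F1 J = 1 - M := by
    rw [hF1A J, if_pos hy, hAJ]
  have hF0J : F0 J = 1 - M := by
    rw [hF0B J, if_pos hy', hBJ]
  have hF1top : ∀ m, F1 m ≤ 1 - M := by
    intro m
    rw [hF1A m]
    split_ifs with h
    · have h2 := hA1 m; linarith
    · push_neg at h
      have h2 : A m ≤ A y := hAmono h
      have h3 : A (y + 1) = A y + p1 y := Finset.sum_range_succ p1 y
      have h4 := hA1 (y + 1)
      linarith
  have hF0top : ∀ m, F0 m ≤ 1 - M := by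
    intro m
    rw [hF0B m]
    split_ifs with h
    · have h2 := hB1 m; linarith
    · push_neg at h
      have h2 : B m ≤ B y' := hBmono h
      have h3 : B (y' + 1) = B y' + p0 y' := Finset.sum_range_succ p0 y'
      have h4 := hB1 (y' + 1)
      linarith
  have hdom' : ∀ m, F1 m ≤ F0 m := by
    intro m
    rw [hF1A m, hF0B m]
    split_ifs with h h'
    · have h2 := hAB m; linarith
    · omega
    · obtain ⟨n, rfl⟩ : ∃ n, m = n + 1 := ⟨m - 1, by omega⟩
      have h2 := hDle n (by omega) (by omega)
      linarith
    · have h2 := hAB m; linarith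
  set qc : ℕ → ℕ → ℝ :=
    fun k l => max 0 (min (F1 (k + 1)) (F0 (l + 1)) - max (F1 k) (F0 l)) with hqcdef
  set q : ℕ → ℕ → ℝ := fun k l => (if k = y ∧ l = y' then M else 0) + qc k l with hqdef
  have hqcnonneg : ∀ k l, 0 ≤ qc k l := fun k l => le_max_left _ _
  have hrow : ∀ k, ∑ l ∈ Finset.range J, qc k l = p1' k := by
    intro k
    have h1k : F1 k ≤ F1 (k + 1) := hF1mono (Nat.le_succ k)
    have hcs := clamp_sum F0 J (F1 k) (F1 (k + 1)) hF0mono h1k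
      (by rw [hF00]; exact hF1nonneg k) (by rw [hF0J]; exact hF1top (k + 1))
    have h2 : F1 (k + 1) = F1 k + p1' k := Finset.sum_range_succ p1' k
    simp only [hqcdef]
    rw [hcs]
    linarith
  have hcol : ∀ l, ∑ k ∈ Finset.range J, qc k l = p0' l := by
    intro l
    have h1l : F0 l ≤ F0 (l + 1) := hF0mono (Nat.le_succ l)
    have hcs := clamp_sum F1 J (F0 l) (F0 (l + 1)) hF1mono h1l
      (by rw [hF10]; exact hF0nonneg l) (by rw [hF1J]; exact hF0top (l + 1))
    have h2 : F0 (l + 1) = F0 l + p0' l := Finset.sum_range_succ p0' l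
    have h3 : ∀ k ∈ Finset.range J, qc k l
        = max 0 (min (F0 (l + 1)) (F1 (k + 1)) - max (F0 l) (F1 k)) := by
      intro k _
      simp only [hqcdef]
      rw [min_comm (F1 (k + 1)) (F0 (l + 1)), max_comm (F1 k) (F0 l)]
    rw [Finset.sum_congr rfl h3, hcs]
    linarith
  refine ⟨q, ?_, ?_, ?_, ?_, ?_⟩
  · intro k l
    simp only [hqdef]
    apply add_nonneg
    · split_ifs
      · exact hM0
      · exact le_refl 0
    · exact hqcnonneg k l
  · intro k
    simp only [hqdef, Finset.sum_add_distrib]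
    rw [hrow k]
    by_cases hk : k = y
    · have h2 : (∑ l ∈ Finset.range J, if k = y ∧ l = y' then M else 0) = M := by
        simp only [hk, true_and]
        rw [Finset.sum_ite_eq' (Finset.range J) y' (fun _ => M)]
        simp [Finset.mem_range, hy']
      rw [h2]
      have h3 : p1' k = p1 k - M := by simp [hp1'def, hk]
      rw [h3]
      ring
    · have h2 : (∑ l ∈ Finset.range J, if k = y ∧ l = y' then M else 0) = 0 := by
        simp [hk]
      rw [h2]
      simp [hp1'def, hk]
  · intro l
    simp only [hqdef, Finset.sum_add_distrib]
    rw [hcol l]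
    by_cases hl : l = y'
    · have h2 : (∑ k ∈ Finset.range J, if k = y ∧ l = y' then M else 0) = M := by
        simp only [hl, and_true]
        rw [Finset.sum_ite_eq' (Finset.range J) y (fun _ => M)]
        simp [Finset.mem_range, hy]
      rw [h2]
      have h3 : p0' l = p0 l - M := by simp [hp0'def, hl]
      rw [h3]
      ring
    · have h2 : (∑ k ∈ Finset.range J, if k = y ∧ l = y' then M else 0) = 0 := by
        simp [hl]
      rw [h2]
      simp [hp0'def, hl]
  · intro k l hkl
    have hzero : min (F1 (k + 1)) (F0 (l + 1)) - max (F1 k) (F0 l) ≤ 0 := by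
      have c1 : F1 (k + 1) ≤ F1 l := hF1mono hkl
      have c2 : F1 l ≤ F0 l := hdom' l
      have c3 := min_le_left (F1 (k + 1)) (F0 (l + 1))
      have c4 := le_max_right (F1 k) (F0 l)
      linarith
    simp only [hqdef, hqcdef]
    rw [if_neg, max_eq_left hzero, add_zero]
    rintro ⟨rfl, rfl⟩
    omega
  · have e1 : F1 (y + 1) = A (y + 1) - M := by
      rw [hF1A, if_pos (Nat.lt_succ_self y)]
    have e2 : F1 y = A y := by
      rw [hF1A]
      simp
    have e3 : F0 (y' + 1) = B (y' + 1) - M := by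
      rw [hF0B, if_pos (Nat.lt_succ_self y')]
    have e4 : F0 y' = B y' := by
      rw [hF0B]
      simp
    have eA : A (y + 1) = A y + p1 y := Finset.sum_range_succ p1 y
    have eB : B (y' + 1) = B y' + p0 y' := Finset.sum_range_succ p0 y'
    have key : min (F1 (y + 1)) (F0 (y' + 1)) ≤ max (F1 y) (F0 y') := by
      rcases le_total (p1 y) (min (p0 y') D) with hc | hc
      · have hM : M = p1 y := by rw [hMdef]; exact min_eq_left hc
        calc min (F1 (y + 1)) (F0 (y' + 1)) ≤ F1 (y + 1) := min_le_left _ _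
          _ = A y := by rw [e1, eA, hM]; ring
          _ = F1 y := e2.symm
          _ ≤ max (F1 y) (F0 y') := le_max_left _ _
      · rcases le_total (p0 y') D with hc2 | hc2
        · have hM : M = p0 y' := by rw [hMdef, min_eq_right hc, min_eq_left hc2]
          calc min (F1 (y + 1)) (F0 (y' + 1)) ≤ F0 (y' + 1) := min_le_right _ _
            _ = B y' := by rw [e3, eB, hM]; ring
            _ = F0 y' := e4.symm
            _ ≤ max (F1 y) (F0 y') := le_max_right _ _
        · have hM : M = D := by rw [hMdef, min_eq_right hc, min_eq_right hc2]
          obtain ⟨h, hh, hDh⟩ := Finset.exists_mem_eq_inf' (Finset.nonempty_Ico.mpr hlt)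
            (fun h => ∑ j ∈ Finset.range (h + 1), (p0 j - p1 j))
          rw [Finset.mem_Ico] at hh
          have hDeq : D = B (h + 1) - A (h + 1) := by
            rw [hDdef, hDh, Finset.sum_sub_distrib]
          have hB' : B (y' + 1) ≤ B (h + 1) := hBmono (Nat.succ_le_succ hh.1)
          have hA' : A (h + 1) ≤ A y := hAmono hh.2
          have hle : F0 (y' + 1) ≤ F1 y := by
            rw [e3, e2]
            have hM2 : M = B (h + 1) - A (h + 1) := hM.trans hDeq
            linarith
          calc min (F1 (y + 1)) (F0 (y' + 1)) ≤ F0 (y' + 1) := min_le_right _ _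
            _ ≤ F1 y := hle
            _ ≤ max (F1 y) (F0 y') := le_max_left _ _
    have hqc0 : qc y y' = 0 := by
      simp only [hqcdef]
      rw [max_eq_left]
      linarith [key]
    simp only [hqdef]
    simp [hqc0]
end

section
/- Fix J ≥ 2, y', y ∈ {0,...,J-1} with y' ≤ y, and probability mass functions p1, p0 on {0,...,J-1} satisfying Σ_{j≤k} p1(j) ≤ Σ_{j≤k} p0(j) for all k. Then there exists a joint distribution of (Y1, Y0) with marginals p1, p0, supported on {(k,ℓ): k ≥ ℓ}, such that pr(Y1 = y, Y0 = y') = max(0, p1(y) + p0(y') - (Σ_{ℓ=0}^{y} p0(ℓ) - Σ_{k=0}^{y'-1} p1(k))). -/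
open Finset

set_option maxHeartbeats 1000000 in
lemma clamp_key (a b u v : ℝ) (hab : a ≤ b) (huv : u ≤ v) :
    max 0 (min b v - max a u) = min b (max a v) - min b (max a u) := by
  rcases le_total a u with h1 | h1 <;> rcases le_total a v with h2 | h2 <;>
    rcases le_total b u with h3 | h3 <;> rcases le_total b v with h4 | h4 <;>
    rw [max_def, max_def, max_def, min_def, min_def, min_def] <;>
    split_ifs <;> linarith

lemma clamp2 (a b c : ℝ) (hab : a ≤ b) : min b (max a c) - a = min c b - min c a := by
  rcases le_total c a with h1 | h1 <;> rcases le_total c b with h2 | h2 <;>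
    rw [max_def, min_def, min_def, min_def] <;> split_ifs <;> linarith

lemma sum_range_mul (f : ℕ → ℝ) (a J : ℕ) :
    ∑ n ∈ range (a*J), f n = ∑ k ∈ range a, ∑ l ∈ range J, f (k*J + l) := by
  induction a with
  | zero => simp
  | succ a ih => rw [Nat.succ_mul, Finset.sum_range_add, ih, Finset.sum_range_succ]

lemma greedy_sum (g : ℕ → ℝ) (hg : ∀ n, 0 ≤ g n) (E : ℝ) (hE : 0 ≤ E) (N : ℕ)
    (htot : E ≤ ∑ n ∈ range N, g n) :
    ∑ n ∈ range N, min (g n) (max 0 (E - ∑ i ∈ range n, g i)) = E := by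
  have key : ∀ M, ∑ n ∈ range M, min (g n) (max 0 (E - ∑ i ∈ range n, g i))
      = min E (∑ i ∈ range M, g i) := by
    intro M
    induction M with
    | zero => simp [hE]
    | succ M ih =>
        rw [Finset.sum_range_succ, ih, Finset.sum_range_succ]
        rcases le_total E (∑ i ∈ range M, g i) with h | h
        · rw [max_eq_left (by linarith), min_eq_right (hg M), min_eq_left h,
            min_eq_left (show E ≤ ∑ i ∈ range M, g i + g M by linarith [hg M]), add_zero]
        · rw [min_eq_right h, max_eq_right (by linarith)]
          rcases le_total (g M) (E - ∑ i ∈ range M, g i) with h2 | h2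
          · rw [min_eq_left h2, min_eq_right (by linarith)]
          · rw [min_eq_right h2, min_eq_left (by linarith)]
            ring
  rw [key N, min_eq_left htot]

/-- Sharpness of the lower bound under monotonicity: a monotone coupling of the
stochastically ordered marginals attaining the lower bound on `pr(Y1 = y, Y0 = y')`. -/
theorem lower_bound_sharp_mono (J : ℕ) (hJ : 2 ≤ J) (y' y : ℕ)
    (hy' : y' < J) (hy : y < J) (hle : y' ≤ y)
    (p1 p0 : ℕ → ℝ)
    (h1 : ∀ k, 0 ≤ p1 k) (h0 : ∀ l, 0 ≤ p0 l)
    (hs1 : ∑ k ∈ Finset.range J, p1 k = 1) (hs0 : ∑ l ∈ Finset.range J, p0 l = 1)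
    (h1supp : ∀ k, J ≤ k → p1 k = 0) (h0supp : ∀ l, J ≤ l → p0 l = 0)
    (hdom : ∀ k, ∑ j ∈ Finset.range (k + 1), p1 j ≤ ∑ j ∈ Finset.range (k + 1), p0 j) :
    ∃ q : ℕ → ℕ → ℝ,
      (∀ k l, 0 ≤ q k l) ∧
      (∀ k, ∑ l ∈ Finset.range J, q k l = p1 k) ∧
      (∀ l, ∑ k ∈ Finset.range J, q k l = p0 l) ∧
      (∀ k l, k < l → q k l = 0) ∧
      q y y' = max 0 (p1 y + p0 y'
        - (∑ l ∈ Finset.range (y + 1), p0 l - ∑ k ∈ Finset.range y', p1 k)) := by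
  set G1 : ℕ → ℝ := fun n => ∑ j ∈ range n, p1 j with hG1
  set G0 : ℕ → ℝ := fun n => ∑ j ∈ range n, p0 j with hG0
  have hG1mono : Monotone G1 := fun a b h =>
    Finset.sum_le_sum_of_subset_of_nonneg (Finset.range_subset_range.2 h) (fun i _ _ => h1 i)
  have hG0mono : Monotone G0 := fun a b h =>
    Finset.sum_le_sum_of_subset_of_nonneg (Finset.range_subset_range.2 h) (fun i _ _ => h0 i)
  have hG1nn : ∀ n, 0 ≤ G1 n := fun n => Finset.sum_nonneg fun i _ => h1 i
  have hG0nn : ∀ n, 0 ≤ G0 n := fun n => Finset.sum_nonneg fun i _ => h0 i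
  have hG1J : ∀ n, J ≤ n → G1 n = 1 := by
    intro n hn
    have : G1 n = G1 J + ∑ j ∈ Ico J n, p1 j := by
      rw [hG1]
      simp only
      rw [Finset.range_eq_Ico, ← Finset.sum_Ico_consecutive _ (Nat.zero_le J) hn,
        ← Finset.range_eq_Ico]
    rw [this, hG1]
    simp only
    rw [hs1, Finset.sum_eq_zero (fun j hj => h1supp j (Finset.mem_Ico.1 hj).1), add_zero]
  have hG0J : ∀ n, J ≤ n → G0 n = 1 := by
    intro n hn
    have : G0 n = G0 J + ∑ j ∈ Ico J n, p0 j := by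
      rw [hG0]
      simp only
      rw [Finset.range_eq_Ico, ← Finset.sum_Ico_consecutive _ (Nat.zero_le J) hn,
        ← Finset.range_eq_Ico]
    rw [this, hG0]
    simp only
    rw [hs0, Finset.sum_eq_zero (fun j hj => h0supp j (Finset.mem_Ico.1 hj).1), add_zero]
  have hG1le1 : ∀ n, G1 n ≤ 1 := by
    intro n
    rcases le_total n J with h | h
    · calc G1 n ≤ G1 J := hG1mono h
        _ = 1 := hG1J J le_rfl
    · exact le_of_eq (hG1J n h)
  have hG0le1 : ∀ n, G0 n ≤ 1 := by
    intro n
    rcases le_total n J with h | h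
    · calc G0 n ≤ G0 J := hG0mono h
        _ = 1 := hG0J J le_rfl
    · exact le_of_eq (hG0J n h)
  have hdom' : ∀ n, G1 n ≤ G0 n := by
    intro n
    cases n with
    | zero => simp [hG1, hG0]
    | succ k => exact hdom k
  have hstep1 : ∀ n, G1 (n+1) = G1 n + p1 n := fun n => Finset.sum_range_succ p1 n
  have hstep0 : ∀ n, G0 (n+1) = G0 n + p0 n := fun n => Finset.sum_range_succ p0 n
  -- quantile coupling
  set r : ℕ → ℕ → ℝ := fun k l => max 0 (min (G1 (k+1)) (G0 (l+1)) - max (G1 k) (G0 l))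
    with hrdef
  have hr0 : ∀ k l, 0 ≤ r k l := fun k l => le_max_left _ _
  have hrsupp : ∀ k l, k < l → r k l = 0 := by
    intro k l hkl
    rw [hrdef]
    simp only
    rw [max_eq_left]
    have h1 : min (G1 (k+1)) (G0 (l+1)) ≤ G1 (k+1) := min_le_left _ _
    have h2 : G1 (k+1) ≤ G0 (k+1) := hdom' _
    have h3 : G0 (k+1) ≤ G0 l := hG0mono hkl
    have h4 : G0 l ≤ max (G1 k) (G0 l) := le_max_right _ _
    linarith
  have hrrow : ∀ k, ∑ l ∈ range J, r k l = p1 k := by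
    intro k
    have hab : G1 k ≤ G1 (k+1) := hG1mono (Nat.le_succ k)
    have : ∀ l, r k l = min (G1 (k+1)) (max (G1 k) (G0 (l+1)))
        - min (G1 (k+1)) (max (G1 k) (G0 l)) := by
      intro l
      rw [hrdef]
      exact clamp_key _ _ _ _ hab (hG0mono (Nat.le_succ l))
    calc ∑ l ∈ range J, r k l
        = ∑ l ∈ range J, (min (G1 (k+1)) (max (G1 k) (G0 (l+1)))
            - min (G1 (k+1)) (max (G1 k) (G0 l))) := Finset.sum_congr rfl fun l _ => this l
      _ = min (G1 (k+1)) (max (G1 k) (G0 J)) - min (G1 (k+1)) (max (G1 k) (G0 0)) :=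
          Finset.sum_range_sub (fun l => min (G1 (k+1)) (max (G1 k) (G0 l))) J
      _ = p1 k := by
          rw [hG0J J le_rfl, show G0 0 = 0 by simp [hG0],
            max_eq_right (hG1le1 k), max_eq_left (hG1nn k),
            min_eq_left (hG1le1 _), min_eq_right hab, hstep1]
          ring
  have hrcol : ∀ l, ∑ k ∈ range J, r k l = p0 l := by
    intro l
    have hab : G0 l ≤ G0 (l+1) := hG0mono (Nat.le_succ l)
    have : ∀ k, r k l = min (G0 (l+1)) (max (G0 l) (G1 (k+1)))
        - min (G0 (l+1)) (max (G0 l) (G1 k)) := by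
      intro k
      rw [hrdef]
      simp only
      rw [min_comm (G1 (k+1)) (G0 (l+1)), max_comm (G1 k) (G0 l)]
      exact clamp_key _ _ _ _ hab (hG1mono (Nat.le_succ k))
    calc ∑ k ∈ range J, r k l
        = ∑ k ∈ range J, (min (G0 (l+1)) (max (G0 l) (G1 (k+1)))
            - min (G0 (l+1)) (max (G0 l) (G1 k))) := Finset.sum_congr rfl fun k _ => this k
      _ = min (G0 (l+1)) (max (G0 l) (G1 J)) - min (G0 (l+1)) (max (G0 l) (G1 0)) :=
          Finset.sum_range_sub (fun k => min (G0 (l+1)) (max (G0 l) (G1 k))) J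
      _ = p0 l := by
          rw [hG1J J le_rfl, show G1 0 = 0 by simp [hG1],
            max_eq_right (hG0le1 l), max_eq_left (hG0nn l),
            min_eq_left (hG0le1 _), min_eq_right hab, hstep0]
          ring
  -- restricted marginals
  have hrow_y : ∑ l ∈ range (y+1), r y l = p1 y := by
    rw [← hrrow y]
    apply Finset.sum_subset (Finset.range_subset_range.2 (by omega))
    intro l _ hl
    exact hrsupp y l (by simp at hl ⊢; omega)
  have hcol_y' : ∑ k ∈ Ico y' J, r k y' = p0 y' := by
    have : ∑ k ∈ range J, r k y' = ∑ k ∈ range y', r k y' + ∑ k ∈ Ico y' J, r k y' := by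
      rw [Finset.range_eq_Ico, ← Finset.sum_Ico_consecutive _ (Nat.zero_le y') (le_of_lt hy'),
        ← Finset.range_eq_Ico]
    have hz : ∑ k ∈ range y', r k y' = 0 :=
      Finset.sum_eq_zero fun k hk => hrsupp k y' (Finset.mem_range.1 hk)
    rw [hrcol y'] at this
    linarith
  -- inner partial row sums within the block
  set c : ℝ := G0 (y+1) with hc
  have hinner : ∀ k, ∑ l ∈ range (y+1), r k l = min c (G1 (k+1)) - min c (G1 k) := by
    intro k
    have hab : G1 k ≤ G1 (k+1) := hG1mono (Nat.le_succ k)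
    have : ∀ l, r k l = min (G1 (k+1)) (max (G1 k) (G0 (l+1)))
        - min (G1 (k+1)) (max (G1 k) (G0 l)) := by
      intro l
      rw [hrdef]
      exact clamp_key _ _ _ _ hab (hG0mono (Nat.le_succ l))
    calc ∑ l ∈ range (y+1), r k l
        = ∑ l ∈ range (y+1), (min (G1 (k+1)) (max (G1 k) (G0 (l+1)))
            - min (G1 (k+1)) (max (G1 k) (G0 l))) := Finset.sum_congr rfl fun l _ => this l
      _ = min (G1 (k+1)) (max (G1 k) c) - min (G1 (k+1)) (max (G1 k) (G0 0)) :=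
          Finset.sum_range_sub (fun l => min (G1 (k+1)) (max (G1 k) (G0 l))) (y+1)
      _ = min (G1 (k+1)) (max (G1 k) c) - G1 k := by
          rw [show G0 0 = 0 by simp [hG0], max_eq_left (hG1nn k), min_eq_right hab]
      _ = min c (G1 (k+1)) - min c (G1 k) := clamp2 _ _ _ hab
  have hblock : ∑ k ∈ Ico y' J, ∑ l ∈ range (y+1), r k l = c - G1 y' := by
    have htel : ∀ m, ∑ k ∈ range m, ∑ l ∈ range (y+1), r k l = min c (G1 m) - min c (G1 0) := by
      intro m
      rw [Finset.sum_congr rfl (fun k _ => hinner k)]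
      exact Finset.sum_range_sub (fun k => min c (G1 k)) m
    have hsplit : ∑ k ∈ range J, ∑ l ∈ range (y+1), r k l
        = ∑ k ∈ range y', ∑ l ∈ range (y+1), r k l + ∑ k ∈ Ico y' J, ∑ l ∈ range (y+1), r k l := by
      rw [Finset.range_eq_Ico, ← Finset.sum_Ico_consecutive _ (Nat.zero_le y') (le_of_lt hy'),
        ← Finset.range_eq_Ico]
    have e1 := htel J
    have e2 := htel y'
    rw [hG1J J le_rfl, min_eq_left (hG0le1 _)] at e1
    have hcy' : G1 y' ≤ c := le_trans (hdom' y') (hG0mono (by omega))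
    rw [min_eq_right hcy'] at e2
    have hG10 : G1 0 = 0 := by simp [hG1]
    rw [hG10, min_eq_right (hG0nn _)] at e1 e2
    rw [e1, e2] at hsplit
    linarith
  -- the lower bound value
  set L : ℝ := max 0 (p1 y + p0 y' - (c - G1 y')) with hLdef
  have hL0 : 0 ≤ L := le_max_left _ _
  have hLm : p1 y + p0 y' - (c - G1 y') ≤ L := le_max_right _ _
  have hLr : L ≤ r y y' := by
    rw [hLdef, hrdef]
    apply max_le_max le_rfl
    have f1 : G1 (y+1) ≤ G0 (y+1) := hdom' _
    have f2 : G1 y' ≤ G1 y := hG1mono hle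
    have f3 : G1 y' ≤ G0 y' := hdom' _
    have f4 : G0 (y'+1) ≤ G0 (y+1) := hG0mono (by omega)
    rw [min_def, max_def]
    split_ifs <;> linarith [hstep1 y, hstep0 y', hc]
  set E : ℝ := r y y' - L with hEdef
  have hE0 : 0 ≤ E := by rw [hEdef]; linarith
  -- total swappable mass
  have hCtot : E ≤ ∑ k ∈ Ico y' J, ∑ l ∈ range (y+1),
      (if k = y ∨ l = y' then 0 else r k l) := by
    have hymem : y ∈ Ico y' J := Finset.mem_Ico.2 ⟨hle, hy⟩
    have hy'mem : y' ∈ range (y+1) := Finset.mem_range.2 (by omega)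
    have hrowpart : ∀ k, ∑ l ∈ range (y+1), (if k = y ∨ l = y' then 0 else r k l)
        = (if k = y then 0 else ((∑ l ∈ range (y+1), r k l) - r k y')) := by
      intro k
      by_cases hk : k = y
      · simp [hk]
      · have hcong : ∀ l ∈ range (y+1), (if k = y ∨ l = y' then 0 else r k l)
            = r k l - (if l = y' then r k l else 0) := by
          intro l _
          by_cases h : l = y' <;> simp [h, hk]
        rw [Finset.sum_congr rfl hcong, Finset.sum_sub_distrib,
          Finset.sum_ite_eq' (range (y+1)) y' (r k), if_pos hy'mem, if_neg hk]
    rw [Finset.sum_congr rfl fun k _ => hrowpart k]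
    have h2 : ∀ k ∈ Ico y' J, (if k = y then 0 else ((∑ l ∈ range (y+1), r k l) - r k y'))
        = ((∑ l ∈ range (y+1), r k l) - r k y')
          - (if k = y then ((∑ l ∈ range (y+1), r k l) - r k y') else 0) := by
      intro k _
      by_cases h : k = y <;> simp [h]
    rw [Finset.sum_congr rfl h2, Finset.sum_sub_distrib,
      Finset.sum_ite_eq' (Ico y' J) y
        (fun k => (∑ l ∈ range (y+1), r k l) - r k y'), if_pos hymem,
      Finset.sum_sub_distrib, hblock, hcol_y', hrow_y, hEdef]
    linarith
  -- encode/decode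
  have hJpos : 0 < J := by omega
  have hdiv : ∀ k l : ℕ, l < J → (k*J+l)/J = k := by
    intro k l h
    rw [add_comm, Nat.add_mul_div_right _ _ hJpos, Nat.div_eq_of_lt h, zero_add]
  have hmod : ∀ k l : ℕ, l < J → (k*J+l)%J = l := by
    intro k l h
    rw [add_comm, Nat.add_mul_mod_self_right, Nat.mod_eq_of_lt h]
  set g : ℕ → ℝ := fun n =>
    if y' ≤ n / J ∧ n % J ≤ y ∧ n / J ≠ y ∧ n % J ≠ y' then r (n/J) (n%J) else 0 with hgdef
  have hg0 : ∀ n, 0 ≤ g n := by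
    intro n
    rw [hgdef]
    dsimp only
    split_ifs
    · exact hr0 _ _
    · exact le_rfl
  have hgkl : ∀ k l, l < J →
      g (k*J+l) = if y' ≤ k ∧ l ≤ y ∧ k ≠ y ∧ l ≠ y' then r k l else 0 := by
    intro k l h
    rw [hgdef]
    dsimp only
    rw [hdiv k l h, hmod k l h]
  have hgtot : E ≤ ∑ n ∈ range (J*J), g n := by
    rw [sum_range_mul]
    have hstep : ∑ k ∈ range J, ∑ l ∈ range J, g (k*J+l)
        = ∑ k ∈ range J, ∑ l ∈ range J,
            (if y' ≤ k ∧ l ≤ y ∧ k ≠ y ∧ l ≠ y' then r k l else 0) :=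
      Finset.sum_congr rfl fun k _ => Finset.sum_congr rfl fun l hl =>
        hgkl k l (Finset.mem_range.1 hl)
    rw [hstep]
    refine le_trans hCtot (le_of_eq ?_)
    have hA : ∀ k, ∑ l ∈ range J, (if y' ≤ k ∧ l ≤ y ∧ k ≠ y ∧ l ≠ y' then r k l else 0)
        = ∑ l ∈ range (y+1), (if y' ≤ k ∧ l ≤ y ∧ k ≠ y ∧ l ≠ y' then r k l else 0) := by
      intro k
      symm
      apply Finset.sum_subset (Finset.range_subset_range.2 (by omega))
      intro l _ hl
      rw [if_neg]
      rintro ⟨-, h2, -, -⟩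
      exact hl (Finset.mem_range.2 (by omega))
    have hB : ∑ k ∈ range J, ∑ l ∈ range (y+1),
          (if y' ≤ k ∧ l ≤ y ∧ k ≠ y ∧ l ≠ y' then r k l else 0)
        = ∑ k ∈ Ico y' J, ∑ l ∈ range (y+1),
          (if y' ≤ k ∧ l ≤ y ∧ k ≠ y ∧ l ≠ y' then r k l else 0) := by
      symm
      apply Finset.sum_subset
      · intro k hk
        exact Finset.mem_range.2 (Finset.mem_Ico.1 hk).2
      · intro k hkJ hk
        apply Finset.sum_eq_zero
        intro l _
        rw [if_neg]
        rintro ⟨h1, -, -, -⟩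
        exact hk (Finset.mem_Ico.2 ⟨h1, Finset.mem_range.1 hkJ⟩)
    have hC : ∀ k ∈ Ico y' J, ∀ l ∈ range (y+1),
        (if k = y ∨ l = y' then 0 else r k l)
        = (if y' ≤ k ∧ l ≤ y ∧ k ≠ y ∧ l ≠ y' then r k l else 0) := by
      intro k hk l hl
      have hk1 : y' ≤ k := (Finset.mem_Ico.1 hk).1
      have hl1 : l ≤ y := by have := Finset.mem_range.1 hl; omega
      by_cases h : k = y ∨ l = y'
      · rw [if_pos h, if_neg]
        rintro ⟨-, -, h3, h4⟩
        rcases h with h | h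
        · exact h3 h
        · exact h4 h
      · push_neg at h
        rw [if_neg (by tauto), if_pos ⟨hk1, hl1, h.1, h.2⟩]
    calc ∑ k ∈ Ico y' J, ∑ l ∈ range (y+1), (if k = y ∨ l = y' then 0 else r k l)
        = ∑ k ∈ Ico y' J, ∑ l ∈ range (y+1),
            (if y' ≤ k ∧ l ≤ y ∧ k ≠ y ∧ l ≠ y' then r k l else 0) :=
          Finset.sum_congr rfl fun k hk => Finset.sum_congr rfl fun l hl => hC k hk l hl
      _ = ∑ k ∈ range J, ∑ l ∈ range (y+1),
            (if y' ≤ k ∧ l ≤ y ∧ k ≠ y ∧ l ≠ y' then r k l else 0) := hB.symm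
      _ = ∑ k ∈ range J, ∑ l ∈ range J,
            (if y' ≤ k ∧ l ≤ y ∧ k ≠ y ∧ l ≠ y' then r k l else 0) := by
          exact Finset.sum_congr rfl fun k _ => (hA k).symm
  -- greedy allocation
  set d : ℕ → ℝ := fun n => min (g n) (max 0 (E - ∑ i ∈ range n, g i)) with hddef
  have hdsum : ∑ n ∈ range (J*J), d n = E := greedy_sum g hg0 E hE0 (J*J) hgtot
  have hd0 : ∀ n, 0 ≤ d n := fun n => le_min (hg0 n) (le_max_left _ _)
  have hdg : ∀ n, d n ≤ g n := fun n => min_le_left _ _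
  set δ : ℕ → ℕ → ℝ := fun k l =>
    if k < J ∧ l < J ∧ y' ≤ k ∧ l ≤ y ∧ k ≠ y ∧ l ≠ y' then d (k*J+l) else 0 with hδdef
  have hδ0 : ∀ k l, 0 ≤ δ k l := by
    intro k l
    rw [hδdef]
    dsimp only
    split_ifs
    · exact hd0 _
    · exact le_rfl
  have hδr : ∀ k l, δ k l ≤ r k l := by
    intro k l
    rw [hδdef]
    dsimp only
    split_ifs with h
    · calc d (k*J+l) ≤ g (k*J+l) := hdg _
        _ = r k l := by rw [hgkl k l h.2.1, if_pos ⟨h.2.2.1, h.2.2.2.1, h.2.2.2.2.1, h.2.2.2.2.2⟩]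
    · exact hr0 k l
  have hδzero : ∀ k l, ¬(k < J ∧ l < J ∧ y' ≤ k ∧ l ≤ y ∧ k ≠ y ∧ l ≠ y') → δ k l = 0 := by
    intro k l h
    rw [hδdef]
    exact if_neg h
  have hδrow_y : ∀ l, δ y l = 0 := fun l => hδzero y l (by tauto)
  have hδcol_y' : ∀ k, δ k y' = 0 := fun k => hδzero k y' (by tauto)
  have hδtot : ∑ k ∈ range J, ∑ l ∈ range J, δ k l = E := by
    have hpt : ∀ k ∈ range J, ∀ l ∈ range J, δ k l = d (k*J+l) := by
      intro k hk l hl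
      have hkJ := Finset.mem_range.1 hk
      have hlJ := Finset.mem_range.1 hl
      rw [hδdef]
      dsimp only
      by_cases h : y' ≤ k ∧ l ≤ y ∧ k ≠ y ∧ l ≠ y'
      · rw [if_pos ⟨hkJ, hlJ, h.1, h.2.1, h.2.2.1, h.2.2.2⟩]
      · rw [if_neg (by tauto)]
        have hgz : g (k*J+l) = 0 := by rw [hgkl k l hlJ, if_neg h]
        have := hdg (k*J+l)
        have := hd0 (k*J+l)
        linarith
    calc ∑ k ∈ range J, ∑ l ∈ range J, δ k l
        = ∑ k ∈ range J, ∑ l ∈ range J, d (k*J+l) :=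
          Finset.sum_congr rfl fun k hk => Finset.sum_congr rfl fun l hl => hpt k hk l hl
      _ = ∑ n ∈ range (J*J), d n := (sum_range_mul d J J).symm
      _ = E := hdsum
  -- the coupling
  set q : ℕ → ℕ → ℝ := fun k l => r k l - δ k l - (if k = y ∧ l = y' then E else 0)
    + (if k = y then ∑ k' ∈ range J, δ k' l else 0)
    + (if l = y' then ∑ l' ∈ range J, δ k l' else 0) with hqdef
  have hqyy' : q y y' = L := by
    rw [hqdef]
    dsimp only
    rw [if_pos ⟨rfl, rfl⟩, if_pos rfl, if_pos rfl,
      Finset.sum_eq_zero (fun k' _ => hδcol_y' k'),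
      Finset.sum_eq_zero (fun l' _ => hδrow_y l'), hδrow_y y', hEdef]
    ring
  refine ⟨q, ?_, ?_, ?_, ?_, ?_⟩
  · -- nonneg
    intro k l
    by_cases h : k = y ∧ l = y'
    · rw [h.1, h.2, hqyy']
      exact hL0
    · rw [hqdef]
      dsimp only
      rw [if_neg h]
      have t1 : (0:ℝ) ≤ (if k = y then ∑ k' ∈ range J, δ k' l else 0) := by
        split_ifs
        · exact Finset.sum_nonneg fun k' _ => hδ0 k' l
        · exact le_rfl
      have t2 : (0:ℝ) ≤ (if l = y' then ∑ l' ∈ range J, δ k l' else 0) := by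
        split_ifs
        · exact Finset.sum_nonneg fun l' _ => hδ0 k l'
        · exact le_rfl
      have := hδr k l
      linarith
  · -- rows
    intro k
    have e0 : ∑ l ∈ range J, q k l
        = (∑ l ∈ range J, r k l) - (∑ l ∈ range J, δ k l)
          - (∑ l ∈ range J, (if k = y ∧ l = y' then E else 0))
          + (∑ l ∈ range J, (if k = y then ∑ k' ∈ range J, δ k' l else 0))
          + (∑ l ∈ range J, (if l = y' then ∑ l' ∈ range J, δ k l' else 0)) := by
      rw [hqdef]
      dsimp only
      rw [Finset.sum_add_distrib, Finset.sum_add_distrib, Finset.sum_sub_distrib,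
        Finset.sum_sub_distrib]
    have e1 : ∑ l ∈ range J, (if k = y ∧ l = y' then E else 0) = if k = y then E else 0 := by
      by_cases hk : k = y
      · subst hk
        simp only [eq_self_iff_true, true_and, if_true]
        rw [Finset.sum_ite_eq' (range J) y' (fun _ => E), if_pos (Finset.mem_range.2 hy')]
      · simp [hk]
    have e2 : ∑ l ∈ range J, (if k = y then ∑ k' ∈ range J, δ k' l else 0)
        = if k = y then E else 0 := by
      by_cases hk : k = y
      · rw [if_pos hk, Finset.sum_congr rfl (fun l _ => if_pos hk), Finset.sum_comm, hδtot]
      · rw [if_neg hk, Finset.sum_congr rfl (fun l _ => if_neg hk), Finset.sum_const,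
          smul_zero]
    have e3 : ∑ l ∈ range J, (if l = y' then ∑ l' ∈ range J, δ k l' else 0)
        = ∑ l' ∈ range J, δ k l' := by
      rw [Finset.sum_ite_eq' (range J) y' (fun _ => ∑ l' ∈ range J, δ k l'),
        if_pos (Finset.mem_range.2 hy')]
    rw [e0, e1, e2, e3, hrrow]
    ring
  · -- columns
    intro l
    have e0 : ∑ k ∈ range J, q k l
        = (∑ k ∈ range J, r k l) - (∑ k ∈ range J, δ k l)
          - (∑ k ∈ range J, (if k = y ∧ l = y' then E else 0))
          + (∑ k ∈ range J, (if k = y then ∑ k' ∈ range J, δ k' l else 0))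
          + (∑ k ∈ range J, (if l = y' then ∑ l' ∈ range J, δ k l' else 0)) := by
      rw [hqdef]
      dsimp only
      rw [Finset.sum_add_distrib, Finset.sum_add_distrib, Finset.sum_sub_distrib,
        Finset.sum_sub_distrib]
    have e1 : ∑ k ∈ range J, (if k = y ∧ l = y' then E else 0) = if l = y' then E else 0 := by
      by_cases hl : l = y'
      · subst hl
        simp only [eq_self_iff_true, and_true, if_true]
        rw [Finset.sum_ite_eq' (range J) y (fun _ => E), if_pos (Finset.mem_range.2 hy)]
      · simp [hl]
    have e2 : ∑ k ∈ range J, (if k = y then ∑ k' ∈ range J, δ k' l else 0)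
        = ∑ k' ∈ range J, δ k' l := by
      rw [Finset.sum_ite_eq' (range J) y (fun _ => ∑ k' ∈ range J, δ k' l),
        if_pos (Finset.mem_range.2 hy)]
    have e3 : ∑ k ∈ range J, (if l = y' then ∑ l' ∈ range J, δ k l' else 0)
        = if l = y' then E else 0 := by
      by_cases hl : l = y'
      · rw [if_pos hl, Finset.sum_congr rfl (fun k _ => if_pos hl), hδtot]
      · rw [if_neg hl, Finset.sum_congr rfl (fun k _ => if_neg hl), Finset.sum_const,
          smul_zero]
    rw [e0, e1, e2, e3, hrcol]
    ring
  · -- support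
    intro k l hkl
    rw [hqdef]
    dsimp only
    have hr := hrsupp k l hkl
    have hδz : δ k l = 0 := le_antisymm (by rw [← hr]; exact hδr k l) (hδ0 k l)
    have i1 : (if k = y ∧ l = y' then E else (0:ℝ)) = 0 := by
      rw [if_neg]
      rintro ⟨rfl, rfl⟩
      omega
    have i2 : (if k = y then ∑ k' ∈ range J, δ k' l else (0:ℝ)) = 0 := by
      split_ifs with hk
      · exact Finset.sum_eq_zero fun k' _ => hδzero k' l (by omega)
      · rfl
    have i3 : (if l = y' then ∑ l' ∈ range J, δ k l' else (0:ℝ)) = 0 := by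
      split_ifs with hl
      · exact Finset.sum_eq_zero fun l' _ => hδzero k l' (by omega)
      · rfl
    rw [hr, hδz, i1, i2, i3]
    ring
  · -- value at (y, y')
    exact hqyy'
end

section
/- Let Y1, Y0 be random variables valued in {0,...,J-1} with 0 ≤ Y1 - Y0 ≤ 1 almost surely. Then for any y ∈ {0,...,J-1} with pr(Y1 = y) > 0 and any S ⊆ {0,...,J-1}, pr(Y0 ∈ S | Y1 = y) = 1_{y ∈ S} + (1_{y-1 ∈ S} - 1_{y ∈ S}) · ξ_y / pr(Y1 = y), where ξ_y = Σ_{j=0}^{y-1}(pr(Y0 = j) - pr(Y1 = j)) and by convention 1_{y-1 ∈ S} = 0 when y = 0. -/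
open MeasureTheory Finset

section aux
variable {Ω : Type*} [MeasurableSpace Ω] (μ : Measure Ω) [IsFiniteMeasure μ]

lemma pr_congr {s t : Set Ω} (h : ∀ᵐ ω ∂μ, ω ∈ s ↔ ω ∈ t) : pr μ s = pr μ t := by
  unfold pr
  rw [measure_congr (Filter.eventuallyEq_set.2 h)]

lemma pr_empty : pr μ (∅ : Set Ω) = 0 := by simp [pr]

lemma pr_union {s t : Set Ω} (h : Disjoint s t) (ht : MeasurableSet t) :
    pr μ (s ∪ t) = pr μ s + pr μ t := by
  unfold pr
  rw [measure_union h ht, ENNReal.toReal_add (measure_ne_top μ s) (measure_ne_top μ t)]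

lemma sum_pr (Y : Ω → ℕ) (hY : Measurable Y) (y : ℕ) :
    ∑ j ∈ Finset.range y, pr μ {ω | Y ω = j} = pr μ {ω | Y ω < y} := by
  unfold pr
  have hset : {ω | Y ω < y} = ⋃ j ∈ Finset.range y, {ω | Y ω = j} := by
    ext ω
    simp only [Set.mem_iUnion, Set.mem_setOf_eq, Finset.mem_range, exists_prop]
    exact ⟨fun h => ⟨_, h, rfl⟩, fun ⟨j, hj, e⟩ => e ▸ hj⟩
  have hmeas := measure_biUnion_finset (μ := μ) (s := Finset.range y)
      (f := fun j => {ω | Y ω = j})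
      (fun i _ j _ hij => Set.disjoint_left.2
        (fun ω (hi : Y ω = i) (hj : Y ω = j) => hij (hi ▸ hj)))
      (fun j _ => hY (MeasurableSet.of_discrete : MeasurableSet {j}))
  rw [hset, hmeas, ENNReal.toReal_sum (fun _ _ => measure_ne_top μ _)]

end aux

/-- General identification of the probability of causation `pr(Y0 ∈ S ∣ Y1 = y)` under
the monotonic incremental treatment effect assumption, with indicator coefficients. -/
theorem pc_general_identification {Ω : Type*} [MeasurableSpace Ω] (μ : Measure Ω)
    [IsProbabilityMeasure μ] (J : ℕ) (Y1 Y0 : Ω → ℕ)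
    (hY1m : Measurable Y1) (hY0m : Measurable Y0)
    (hY1 : ∀ ω, Y1 ω < J) (hY0 : ∀ ω, Y0 ω < J)
    (hmono : ∀ᵐ ω ∂μ, Y0 ω ≤ Y1 ω ∧ Y1 ω ≤ Y0 ω + 1)
    (y : ℕ) (hy : y < J) (hpos : 0 < pr μ {ω | Y1 ω = y}) (S : Finset ℕ) :
    pr μ {ω | Y0 ω ∈ S ∧ Y1 ω = y} / pr μ {ω | Y1 ω = y}
      = (if y ∈ S then (1 : ℝ) else 0)
        + ((if 1 ≤ y ∧ y - 1 ∈ S then (1 : ℝ) else 0) - (if y ∈ S then (1 : ℝ) else 0))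
          * (∑ j ∈ Finset.range y, (pr μ {ω | Y0 ω = j} - pr μ {ω | Y1 ω = j}))
          / pr μ {ω | Y1 ω = y} := by
  set B : Set Ω := {ω | Y0 ω + 1 = y ∧ Y1 ω = y} with hBdef
  set C : Set Ω := {ω | Y0 ω = y ∧ Y1 ω = y} with hCdef
  set p : ℝ := pr μ {ω | Y1 ω = y} with hpdef
  set ξ : ℝ := ∑ j ∈ Finset.range y, (pr μ {ω | Y0 ω = j} - pr μ {ω | Y1 ω = j}) with hξdef
  have hmB : MeasurableSet B := (hY0m (MeasurableSet.of_discrete : MeasurableSet {n | n + 1 = y})).inter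
      (hY1m (MeasurableSet.of_discrete : MeasurableSet {y}))
  have hmC : MeasurableSet C := (hY0m (MeasurableSet.of_discrete : MeasurableSet {y})).inter
      (hY1m (MeasurableSet.of_discrete : MeasurableSet {y}))
  -- ξ = pr B
  have h1 : ξ = pr μ {ω | Y0 ω < y} - pr μ {ω | Y1 ω < y} := by
    rw [hξdef, Finset.sum_sub_distrib, sum_pr μ Y0 hY0m, sum_pr μ Y1 hY1m]
  have h2 : pr μ {ω | Y0 ω < y} = pr μ ({ω | Y1 ω < y} ∪ B) := by
    apply pr_congr
    filter_upwards [hmono] with ω hω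
    simp only [Set.mem_union, Set.mem_setOf_eq, hBdef]
    omega
  have h2' : pr μ ({ω | Y1 ω < y} ∪ B) = pr μ {ω | Y1 ω < y} + pr μ B :=
    pr_union μ (Set.disjoint_left.2 (fun ω (h : Y1 ω < y) (hb : ω ∈ B) => by
      simp only [hBdef, Set.mem_setOf_eq] at hb; omega)) hmB
  have hB : ξ = pr μ B := by rw [h1, h2, h2']; ring
  -- pr C = p - ξ
  have h3 : p = pr μ (C ∪ B) := by
    apply pr_congr
    filter_upwards [hmono] with ω hω
    simp only [Set.mem_union, Set.mem_setOf_eq, hBdef, hCdef]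
    omega
  have h3' : pr μ (C ∪ B) = pr μ C + pr μ B :=
    pr_union μ (Set.disjoint_left.2 (fun ω (hc : ω ∈ C) (hb : ω ∈ B) => by
      simp only [hBdef, hCdef, Set.mem_setOf_eq] at hb hc; omega)) hmB
  have hC : pr μ C = p - ξ := by rw [hB]; rw [h3, h3']; ring
  -- decompose the event
  have hS : pr μ {ω | Y0 ω ∈ S ∧ Y1 ω = y}
      = (if y ∈ S then pr μ C else 0) + (if 1 ≤ y ∧ y - 1 ∈ S then pr μ B else 0) := by
    by_cases hs1 : y ∈ S <;> by_cases hs2 : 1 ≤ y ∧ y - 1 ∈ S <;>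
      [rw [if_pos hs1, if_pos hs2]; rw [if_pos hs1, if_neg hs2, add_zero];
       rw [if_neg hs1, if_pos hs2, zero_add]; rw [if_neg hs1, if_neg hs2, add_zero]]
    · -- both
      have : pr μ {ω | Y0 ω ∈ S ∧ Y1 ω = y} = pr μ (C ∪ B) := by
        apply pr_congr
        filter_upwards [hmono] with ω hω
        simp only [Set.mem_union, Set.mem_setOf_eq, hBdef, hCdef]
        constructor
        · rintro ⟨hs, he⟩
          rcases (by omega : Y0 ω = y ∨ Y0 ω + 1 = y) with h | h
          · exact Or.inl ⟨h, he⟩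
          · exact Or.inr ⟨h, he⟩
        · rintro (⟨e, he⟩ | ⟨e, he⟩)
          · exact ⟨e ▸ hs1, he⟩
          · have : Y0 ω = y - 1 := by omega
            exact ⟨this ▸ hs2.2, he⟩
      rw [this, h3']
    · -- y ∈ S, ¬(1 ≤ y ∧ y-1 ∈ S)
      apply pr_congr
      filter_upwards [hmono] with ω hω
      simp only [Set.mem_setOf_eq, hCdef]
      constructor
      · rintro ⟨hs, he⟩
        rcases (by omega : Y0 ω = y ∨ Y0 ω + 1 = y) with h | h
        · exact ⟨h, he⟩
        · exfalso
          have h1y : 1 ≤ y := by omega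
          have : Y0 ω = y - 1 := by omega
          exact hs2 ⟨h1y, this ▸ hs⟩
      · rintro ⟨e, he⟩
        exact ⟨e ▸ hs1, he⟩
    · -- y ∉ S, (1 ≤ y ∧ y-1 ∈ S)
      apply pr_congr
      filter_upwards [hmono] with ω hω
      simp only [Set.mem_setOf_eq, hBdef]
      constructor
      · rintro ⟨hs, he⟩
        rcases (by omega : Y0 ω = y ∨ Y0 ω + 1 = y) with h | h
        · exact absurd (h ▸ hs) hs1
        · exact ⟨h, he⟩
      · rintro ⟨e, he⟩
        have : Y0 ω = y - 1 := by omega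
        exact ⟨this ▸ hs2.2, he⟩
    · -- neither
      rw [← pr_empty μ]
      apply pr_congr
      filter_upwards [hmono] with ω hω
      simp only [Set.mem_setOf_eq, Set.mem_empty_iff_false, iff_false]
      rintro ⟨hs, he⟩
      rcases (by omega : Y0 ω = y ∨ Y0 ω + 1 = y) with h | h
      · exact hs1 (h ▸ hs)
      · have h1y : 1 ≤ y := by omega
        have : Y0 ω = y - 1 := by omega
        exact hs2 ⟨h1y, this ▸ hs⟩
  have hp : p ≠ 0 := ne_of_gt hpos
  rw [hS, hC, ← hB]
  by_cases hs1 : y ∈ S <;> by_cases hs2 : 1 ≤ y ∧ y - 1 ∈ S <;>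
    [simp only [if_pos hs1, if_pos hs2]; simp only [if_pos hs1, if_neg hs2];
     simp only [if_neg hs1, if_pos hs2]; simp only [if_neg hs1, if_neg hs2]] <;>
    field_simp <;> ring
end
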